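/- arXiv:1405.3947 — 16 statements merged into one kernel-verified Lean document; each statement's English description precedes it below -/
import Mathlib

section
/- Let A be a dense additive subgroup of the reals, let g : ℝ → ℝ satisfy g(0) = 1, and let K : ℝ → ℝ be not identically zero on A and satisfy the Goldie equation K(u+v) = g(v)·K(u) + K(v) for all u, v ∈ A. Then the set A_g := {u ∈ A : g(u) = 1} is an additive subgroup of ℝ, K is additive relative to A_g in the sense that K(u+v) = K(u) + K(v) for every v ∈ A_g and every u ∈ A, and there is a constant κ such that K(t) = κ·(g(t) − 1) for every t ∈ {0} ∪ (A \ A_g). -/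
theorem goldie_equation_on_dense_subgroup
    (A : AddSubgroup ℝ) (hA : Dense (A : Set ℝ))
    (g K : ℝ → ℝ) (hg0 : g 0 = 1)
    (hK : ∃ u ∈ A, K u ≠ 0)
    (hGoldie : ∀ u ∈ A, ∀ v ∈ A, K (u + v) = g v * K u + K v) :
    (∃ B : AddSubgroup ℝ, (B : Set ℝ) = {u : ℝ | u ∈ A ∧ g u = 1}) ∧
    (∀ v, v ∈ A → g v = 1 → ∀ u ∈ A, K (u + v) = K u + K v) ∧
    (∃ κ : ℝ, ∀ t : ℝ, (t = 0 ∨ (t ∈ A ∧ g t ≠ 1)) → K t = κ * (g t - 1)) := by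
  obtain ⟨u₀, hu₀A, hKu₀⟩ := hK
  have hK0 : K 0 = 0 := by
    have h := hGoldie 0 A.zero_mem 0 A.zero_mem
    rw [hg0] at h; simp at h; linarith
  have star : ∀ u ∈ A, ∀ v ∈ A, (g v - 1) * K u = (g u - 1) * K v := by
    intro u hu v hv
    have h1 := hGoldie u hu v hv
    have h2 := hGoldie v hv u hu
    rw [add_comm] at h2
    nlinarith [h1, h2]
  have hpart2 : ∀ v, v ∈ A → g v = 1 → ∀ u ∈ A, K (u + v) = K u + K v := by
    intro v hv hgv u hu
    rw [hGoldie u hu v hv, hgv, one_mul]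
  by_cases hcase : g u₀ = 1
  · have hall : ∀ v ∈ A, g v = 1 := by
      intro v hv
      have h := star u₀ hu₀A v hv
      rw [hcase] at h
      have : (g v - 1) * K u₀ = 0 := by linarith
      rcases mul_eq_zero.mp this with h' | h'
      · linarith
      · exact absurd h' hKu₀
    refine ⟨⟨A, ?_⟩, hpart2, 0, ?_⟩
    · ext x
      simp only [SetLike.mem_coe, Set.mem_setOf_eq]
      exact ⟨fun h => ⟨h, hall x h⟩, fun h => h.1⟩
    · rintro t (rfl | ⟨ht, hgt⟩)
      · simp [hg0, hK0]
      · exact absurd (hall t ht) hgt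
  · have hgu₀ : g u₀ - 1 ≠ 0 := sub_ne_zero.mpr hcase
    have hKzero : ∀ u ∈ A, g u = 1 → K u = 0 := by
      intro u hu hgu
      have h := star u hu u₀ hu₀A
      rw [hgu] at h; simp at h
      rcases h with h' | h'
      · exact absurd (by linarith : g u₀ = 1) hcase
      · exact h'
    have hgone : ∀ u ∈ A, K u = 0 → g u = 1 := by
      intro u hu hKu
      have h := star u hu u₀ hu₀A
      rw [hKu] at h; simp at h
      rcases h with h' | h'
      · linarith
      · exact absurd h' hKu₀
    refine ⟨⟨{ carrier := {u : ℝ | u ∈ A ∧ g u = 1},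
               zero_mem' := ⟨A.zero_mem, hg0⟩,
               add_mem' := ?_, neg_mem' := ?_ }, rfl⟩, hpart2, ?_⟩
    · -- add_mem
      rintro a b ⟨haA, hga⟩ ⟨hbA, hgb⟩
      have hKab : K (a + b) = 0 := by
        rw [hGoldie a haA b hbA, hKzero a haA hga, hKzero b hbA hgb]; ring
      exact ⟨A.add_mem haA hbA, hgone _ (A.add_mem haA hbA) hKab⟩
    · -- neg_mem
      rintro a ⟨haA, hga⟩
      have hKna : K (-a) = 0 := by
        have h := hGoldie a haA (-a) (A.neg_mem haA)
        rw [add_neg_cancel, hK0, hKzero a haA hga] at h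
        linarith
      exact ⟨A.neg_mem haA, hgone _ (A.neg_mem haA) hKna⟩
    · refine ⟨K u₀ / (g u₀ - 1), ?_⟩
      rintro t (rfl | ⟨ht, hgt⟩)
      · simp [hg0, hK0]
      · have h := star t ht u₀ hu₀A
        field_simp
        linarith
end

section
/- Let g : ℝ → ℝ satisfy g(0) = 1, g(x) ≠ 1 for every x ≠ 0, and suppose g is bounded on some neighbourhood of 0. If K : ℝ → ℝ is not identically zero and satisfies the Goldie equation K(u+v) = g(v)·K(u) + K(v) for all u, v ∈ ℝ, then there exists ρ ≠ 0 such that g(x) = e^{−ρx} for all x ∈ ℝ, and there exists a constant c such that K(t) = c·(1 − e^{−ρt}) for all t ∈ ℝ. -/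
/-!
Symmetrising the Goldie equation in `u` and `v` gives `(g v - 1) K u = (g u - 1) K v`, so a
nonzero solution is `K = c (g - 1)` with `c ≠ 0`, and substituting this back shows that `g` is
multiplicative. Then `log ∘ g` is additive and bounded above near `0`, hence continuous and
linear, so `g x = exp (a x)`; `a ≠ 0` because `g` takes the value `1` only at `0`.
-/

open Filter Topology Real

def GoldieEquation {A R : Type*} [Add A] [Add R] [Mul R] (g K : A → R) : Prop :=
  ∀ u v, K (u + v) = g v * K u + K v

namespace GoldieEquation

variable {A R : Type*} [AddCommMonoid A] {g K : A → R}

theorem apply_zero [Ring R] (hK : GoldieEquation g K) (hg0 : g 0 = 1) : K 0 = 0 := by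
  have h := hK 0 0
  rw [add_zero, hg0, one_mul] at h
  exact left_eq_add.mp h

theorem sub_one_mul_comm [CommRing R] (hK : GoldieEquation g K) (u v : A) :
    (g v - 1) * K u = (g u - 1) * K v := by
  have h := hK v u
  rw [add_comm v u, hK u v] at h
  linear_combination h

theorem eq_mul_sub_one [Field R] (hK : GoldieEquation g K) {x : A} (hx : g x ≠ 1) (v : A) :
    K v = K x / (g x - 1) * (g v - 1) := by
  have hx' : g x - 1 ≠ 0 := sub_ne_zero.mpr hx
  field_simp
  linear_combination hK.sub_one_mul_comm v x

theorem map_add_eq_mul [CommRing R] [IsDomain R] (hK : GoldieEquation g K) {c : R} (hc : c ≠ 0)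
    (hKc : ∀ v, K v = c * (g v - 1)) (u v : A) : g (u + v) = g u * g v := by
  have h := hK u v
  rw [hKc, hKc, hKc] at h
  have h' : c * g (u + v) = c * (g u * g v) := by linear_combination h
  exact mul_left_cancel₀ hc h'

end GoldieEquation

namespace AddMonoidHom

/- An additive map is `ℚ`-linear, and a linear map over a nontrivially normed field that sends
some neighbourhood of `0` to a bounded set is continuous. -/
theorem continuous_of_isBounded_image (f : ℝ →+ ℝ) {U : Set ℝ} (hU : U ∈ 𝓝 0)
    (hf : Bornology.IsBounded (f '' U)) : Continuous f :=
  (f.toRatLinearMap.clmOfExistsBoundedImage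
    ⟨U, hU, (NormedSpace.isVonNBounded_iff ℚ).mpr hf⟩).continuous

theorem continuous_of_bddAbove_image (f : ℝ →+ ℝ) {U : Set ℝ} (hU : U ∈ 𝓝 0)
    (hf : BddAbove (f '' U)) : Continuous f := by
  obtain ⟨M, hM⟩ := hf
  have hV : U ∩ -U ∈ 𝓝 (0 : ℝ) := inter_mem hU (neg_mem_nhds_zero ℝ hU)
  refine f.continuous_of_isBounded_image hV (isBounded_iff_bddBelow_bddAbove.mpr ⟨?_, ?_⟩)
  · refine ⟨-M, ?_⟩
    rintro _ ⟨x, hx, rfl⟩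
    have h := hM ⟨-x, hx.2, rfl⟩
    rw [map_neg] at h
    linarith
  · exact ⟨M, (Set.image_mono Set.inter_subset_left).trans hM⟩

end AddMonoidHom

section ExponentialCauchy

variable {g : ℝ → ℝ}

theorem pos_of_map_add_eq_mul (hg0 : g 0 = 1) (hmul : ∀ u v, g (u + v) = g u * g v) (x : ℝ) :
    0 < g x := by
  have hne : g (x / 2) ≠ 0 := fun h => by
    simpa [h, hg0] using hmul (x / 2) (-(x / 2))
  rw [← add_halves x, hmul]
  exact mul_self_pos.mpr hne

theorem exists_eq_exp_mul_of_map_add_eq_mul (hg0 : g 0 = 1)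
    (hmul : ∀ u v, g (u + v) = g u * g v) {U : Set ℝ} (hU : U ∈ 𝓝 0)
    (hbdd : BddAbove (g '' U)) :
    ∃ a, ∀ x, g x = exp (a * x) := by
  have hpos := pos_of_map_add_eq_mul hg0 hmul
  let logg : ℝ →+ ℝ := AddMonoidHom.mk' (fun x => log (g x)) fun u v => by
    rw [hmul, log_mul (hpos u).ne' (hpos v).ne']
  have hlogg_bdd : BddAbove (logg '' U) := by
    obtain ⟨M, hM⟩ := hbdd
    refine ⟨log M, ?_⟩
    rintro _ ⟨x, hx, rfl⟩
    exact log_le_log (hpos x) (hM ⟨x, hx, rfl⟩)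
  have hlin := map_real_smul logg (logg.continuous_of_bddAbove_image hU hlogg_bdd)
  refine ⟨log (g 1), fun x => ?_⟩
  have hx : log (g x) = x * log (g 1) := by simpa [logg] using hlin x 1
  rw [← exp_log (hpos x), hx, mul_comm]

end ExponentialCauchy

theorem goldie_equation_locally_bounded
    (g K : ℝ → ℝ) (hg0 : g 0 = 1)
    (hg1 : ∀ x : ℝ, x ≠ 0 → g x ≠ 1)
    (hloc : ∃ U ∈ nhds (0 : ℝ), ∃ M : ℝ, ∀ x ∈ U, |g x| ≤ M)
    (hK : ∃ x : ℝ, K x ≠ 0)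
    (hGoldie : ∀ u v : ℝ, K (u + v) = g v * K u + K v) :
    ∃ ρ : ℝ, ρ ≠ 0 ∧ (∀ x : ℝ, g x = Real.exp (-ρ * x)) ∧
      ∃ c : ℝ, ∀ t : ℝ, K t = c * (1 - Real.exp (-ρ * t)) := by
  have hGoldie : GoldieEquation g K := hGoldie
  obtain ⟨x₀, hx₀⟩ := hK
  have hgx₀ : g x₀ ≠ 1 := hg1 x₀ fun h => hx₀ (h ▸ hGoldie.apply_zero hg0)
  set c := K x₀ / (g x₀ - 1)
  have hKc : ∀ v, K v = c * (g v - 1) := hGoldie.eq_mul_sub_one hgx₀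
  have hc : c ≠ 0 := fun h => hx₀ (by rw [hKc, h, zero_mul])
  obtain ⟨U, hU, M, hM⟩ := hloc
  obtain ⟨a, ha⟩ := exists_eq_exp_mul_of_map_add_eq_mul hg0 (hGoldie.map_add_eq_mul hc hKc) hU
    ⟨M, by rintro _ ⟨x, hx, rfl⟩; exact (le_abs_self _).trans (hM x hx)⟩
  have ha0 : a ≠ 0 := fun h => hg1 1 one_ne_zero (by rw [ha, h, zero_mul, exp_zero])
  refine ⟨-a, neg_ne_zero.mpr ha0, fun x => by rw [ha, neg_neg], -c, fun t => ?_⟩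
  rw [hKc, ha, neg_neg]
  ring
end

section
/- Let K, g : ℝ → ℝ satisfy the Goldie equation K(u+v) = g(v)·K(u) + K(v) for all u, v ∈ ℝ, with K(x) > 0 and g(x) > 0 for all x > 0, and with g(x) ≠ 1 for all x ≠ 0. Then either K is identically zero, or K and g are continuous on ℝ₊ and there exists ρ ≠ 0 such that g(x) = e^{−ρx} for all x. -/
lemma additive_monotone_le (F : ℝ → ℝ)
    (hadd : ∀ u v : ℝ, F (u + v) = F u + F v) (hmono : Monotone F) :
    ∀ x : ℝ, F x ≤ F 1 * x := by
  have hF0 : F 0 = 0 := by have := hadd 0 0; simpa using this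
  have hq : ∀ q : ℚ, F q = F 1 * q := by
    intro q
    have := map_rat_smul (AddMonoidHom.mk' F hadd) q (1 : ℝ)
    simpa [Rat.smul_def, mul_comm] using this
  have hF1 : 0 ≤ F 1 := by
    have := hmono (by norm_num : (0:ℝ) ≤ 1); rw [hF0] at this; exact this
  intro x
  have key : ∀ r : ℚ, x ≤ r → F x ≤ F 1 * r := fun r hr => (hq r) ▸ hmono hr
  by_contra h
  push_neg at h
  rcases eq_or_lt_of_le hF1 with h0 | h0
  · obtain ⟨r, hr⟩ := exists_rat_gt x
    have := key r hr.le
    rw [← h0] at this h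
    simp at this h
    linarith
  · have hx : x < F x / F 1 := (lt_div_iff₀ h0).2 (by linarith [mul_comm (F 1) x])
    obtain ⟨r, hr1, hr2⟩ := exists_rat_btwn hx
    have := key r hr1.le
    have : F x < F x := lt_of_le_of_lt this (by
      calc F 1 * r < F 1 * (F x / F 1) := by exact (mul_lt_mul_iff_right₀ h0).2 hr2
        _ = F x := by field_simp)
    exact absurd this (lt_irrefl _)

lemma additive_monotone_linear (F : ℝ → ℝ)
    (hadd : ∀ u v : ℝ, F (u + v) = F u + F v) (hmono : Monotone F) :
    ∀ x : ℝ, F x = F 1 * x := by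
  intro x
  refine le_antisymm (additive_monotone_le F hadd hmono x) ?_
  set G : ℝ → ℝ := fun y => -F (-y) with hG
  have hGadd : ∀ u v : ℝ, G (u + v) = G u + G v := by
    intro u v
    show -F (-(u+v)) = -F (-u) + -F (-v)
    rw [show -(u+v) = -u + -v by ring, hadd]; ring
  have hGmono : Monotone G := fun a b hab => by
    simp only [hG, neg_le_neg_iff]; exact hmono (by linarith)
  have hG1 : G 1 = F 1 := by
    have h01 := hadd 1 (-1)
    have hF0 : F 0 = 0 := by have := hadd 0 0; simpa using this
    simp only [add_neg_cancel, hF0] at h01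
    simp only [hG]; linarith
  have := additive_monotone_le G hGadd hGmono (-x)
  rw [hG1] at this
  simp only [hG] at this
  have hFx : F (-(-x)) = F x := by norm_num
  nlinarith [this]

theorem goldie_equation_positive_solutions
    (K g : ℝ → ℝ)
    (hGoldie : ∀ u v : ℝ, K (u + v) = g v * K u + K v)
    (hKpos : ∀ x : ℝ, 0 < x → 0 < K x)
    (hgpos : ∀ x : ℝ, 0 < x → 0 < g x)
    (hg1 : ∀ x : ℝ, x ≠ 0 → g x ≠ 1) :
    (∀ x : ℝ, K x = 0) ∨
    (ContinuousOn K (Set.Ioi 0) ∧ ContinuousOn g (Set.Ioi 0) ∧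
      ∃ ρ : ℝ, ρ ≠ 0 ∧ ∀ x : ℝ, g x = Real.exp (-ρ * x)) := by
  right
  -- g 0 = 1
  have hg0 : g 0 = 1 := by
    by_contra h
    have h1 := hGoldie 1 0
    have h2 := hGoldie 2 0
    rw [add_zero] at h1 h2
    have hK12 : K 1 = K 2 := by
      have : (K 1 - K 2) * (1 - g 0) = 0 := by linarith [mul_comm (g 0) (K 1), mul_comm (g 0) (K 2)]
      rcases mul_eq_zero.1 this with h' | h'
      · linarith
      · exact absurd (by linarith : g 0 = 1) h
    have h3 := hGoldie 1 1
    norm_num at h3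
    have : g 1 * K 1 = 0 := by linarith
    rcases mul_eq_zero.1 this with h' | h'
    · exact absurd h' (ne_of_gt (hgpos 1 one_pos))
    · exact absurd h' (ne_of_gt (hKpos 1 one_pos))
  have hK0 : K 0 = 0 := by
    have h1 := hGoldie 1 0
    rw [add_zero, hg0, one_mul] at h1
    linarith
  -- K u = c * (g u - 1)
  have hg1ne : g 1 - 1 ≠ 0 := sub_ne_zero.2 (hg1 1 one_ne_zero)
  set c : ℝ := K 1 / (g 1 - 1) with hcdef
  have hc : c ≠ 0 := div_ne_zero (ne_of_gt (hKpos 1 one_pos)) hg1ne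
  have hKc : ∀ u : ℝ, K u = c * (g u - 1) := by
    intro u
    have h1 := hGoldie u 1
    have h2 := hGoldie 1 u
    rw [add_comm u 1] at h1
    have key : (g 1 - 1) * K u = (g u - 1) * K 1 := by linarith
    rw [hcdef]
    field_simp
    linarith [mul_comm (K u) (g 1 - 1), mul_comm (K 1) (g u - 1)]
  -- multiplicativity
  have hmul : ∀ u v : ℝ, g (u + v) = g u * g v := by
    intro u v
    have h := hGoldie u v
    rw [hKc (u+v), hKc u, hKc v] at h
    have h2 : c * g (u + v) = c * (g u * g v) := by linear_combination h
    exact mul_left_cancel₀ hc h2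
  -- g positive everywhere
  have hgne : ∀ x : ℝ, g x ≠ 0 := by
    intro x hx
    have := hmul x (-x)
    rw [add_neg_cancel, hg0, hx, zero_mul] at this
    exact one_ne_zero this
  have hgpos' : ∀ x : ℝ, 0 < g x := by
    intro x
    have h := hmul (x/2) (x/2)
    rw [add_halves] at h
    rw [h]
    exact mul_self_pos.2 (hgne _)
  -- log of g is additive
  set F : ℝ → ℝ := fun x => Real.log (g x) with hFdef
  have hFadd : ∀ u v : ℝ, F (u + v) = F u + F v := by
    intro u v
    simp only [hFdef, hmul u v]
    exact Real.log_mul (hgne u) (hgne v)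
  -- linearity of F in both sign cases
  have hFlin : ∀ x : ℝ, F x = F 1 * x := by
    rcases lt_or_gt_of_ne hc with hcneg | hcpos
    · -- c < 0 : g x < 1 for x > 0, F antitone
      have hlt : ∀ x : ℝ, 0 < x → g x < 1 := by
        intro x hx
        have := hKpos x hx
        rw [hKc x] at this
        nlinarith
      have hGmono : Monotone (fun y => -F y) := by
        intro a b hab
        rcases eq_or_lt_of_le hab with rfl | hab
        · exact le_refl _
        · have hgb : g b = g a * g (b - a) := by
            rw [← hmul a (b - a)]; ring_nf
          have : g b < g a := by
            rw [hgb]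
            nlinarith [hgpos' a, hlt (b - a) (by linarith)]
          simp only [neg_le_neg_iff, hFdef]
          exact Real.log_le_log (hgpos' b) this.le
      have := additive_monotone_linear (fun y => -F y)
        (fun u v => by show -F (u+v) = -F u + -F v; rw [hFadd u v]; ring) hGmono
      intro x
      have hx := this x
      simp only [neg_mul] at hx
      linarith [hx]
    · -- c > 0 : g x > 1 for x > 0, F monotone
      have hlt : ∀ x : ℝ, 0 < x → 1 < g x := by
        intro x hx
        have := hKpos x hx
        rw [hKc x] at this
        nlinarith
      have hFmono : Monotone F := by
        intro a b hab
        rcases eq_or_lt_of_le hab with rfl | hab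
        · exact le_refl _
        · have hgb : g b = g a * g (b - a) := by
            rw [← hmul a (b - a)]; ring_nf
          have : g a < g b := by
            rw [hgb]
            nlinarith [hgpos' a, hlt (b - a) (by linarith)]
          exact Real.log_le_log (hgpos' a) this.le
      exact additive_monotone_linear F hFadd hFmono
  -- conclude the exponential form
  have hF1 : F 1 ≠ 0 := by
    simp only [hFdef]
    intro h
    rcases Real.log_eq_zero.1 h with h' | h' | h'
    · exact hgne 1 h'
    · exact hg1 1 one_ne_zero h'
    · linarith [hgpos' 1]
  have hgexp : ∀ x : ℝ, g x = Real.exp (-(-F 1) * x) := by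
    intro x
    rw [neg_neg, ← hFlin x]
    exact (Real.exp_log (hgpos' x)).symm
  have hcont : Continuous fun x : ℝ => Real.exp (-(-F 1) * x) :=
    Real.continuous_exp.comp (continuous_const.mul continuous_id)
  refine ⟨?_, ?_, -F 1, neg_ne_zero.2 hF1, hgexp⟩
  · have hKfun : K = fun x => c * (Real.exp (-(-F 1) * x) - 1) := by
      funext x; rw [hKc x, hgexp x]
    rw [hKfun]
    exact (continuous_const.mul (hcont.sub continuous_const)).continuousOn
  · have hgfun : g = fun x => Real.exp (-(-F 1) * x) := funext hgexp
    rw [hgfun]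
    exact hcont.continuousOn
end

section
/- (Generalized Goldie Theorem.) Let A be a dense additive subgroup of ℝ, and let g : ℝ → ℝ be continuous with g(0) = 1 and with {u ∈ A : g(u) = 1} = {0}. Suppose: (i) F* : ℝ → ℝ satisfies F*(x) > 0 for all x > 0, F*(u+v) ≤ F*(u) + F*(v) for all u, v > 0, and F*(x) → 0 as x → 0⁺; (ii) there is a function K, not identically zero on A, satisfying K(u+v) = g(v)·K(u) + K(v) for all u, v ∈ A, such that F*(u+v) = g(v)·K(u) + F*(v) for all u ∈ A and all v > 0; (iii) F*(x) = K(x) for all x ∈ A. Then there exist c > 0 and ρ ≥ 0 such that g(x) = e^{−ρx} for all x ∈ ℝ and F*(x) = c·H_ρ(x) for all x ∈ ℝ. -/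
/-!
Comparing the Goldie equation for `(u, v)` and `(v, u)` forces `K = κ (g - 1)` on `A`
with `κ ≠ 0`; substituting back shows that `g` is multiplicative on `A`,
hence, by continuity and density, on `ℝ`, so `g = exp (a ·)`. The difference
`F - κ (g - 1)` is invariant under translation by elements of `A` on `(0, ∞)` and tends to `0`
at `0⁺`, so it vanishes. Finally positivity and subadditivity of `F = κ (e^{a x} - 1)` at
`x = 1` give `κ (e^a - 1)² ≤ 0`, whence `κ < 0` and `a < 0`.
-/

/-- `H ρ t = (1 - e^{-ρ t})/ρ` for `ρ ≠ 0`, with `H 0 t = t`. -/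
noncomputable def Hrho (ρ t : ℝ) : ℝ := if ρ = 0 then t else (1 - Real.exp (-ρ * t)) / ρ

open Filter Topology Real

def IsGoldieOn {G 𝕜 : Type*} [Add G] [Mul 𝕜] [Add 𝕜] (A : Set G) (g K : G → 𝕜) : Prop :=
  ∀ u ∈ A, ∀ v ∈ A, K (u + v) = g v * K u + K v

namespace IsGoldieOn

variable {G 𝕜 : Type*} {g K : G → 𝕜}

theorem apply_zero [AddZeroClass G] [Ring 𝕜] {A : Set G} (h : IsGoldieOn A g K) (h0 : 0 ∈ A)
    (hg0 : g 0 = 1) : K 0 = 0 := by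
  have := h 0 h0 0 h0
  rw [add_zero, hg0, one_mul, left_eq_add] at this
  exact this

theorem sub_one_mul_comm [AddCommMagma G] [CommRing 𝕜] {A : Set G} (h : IsGoldieOn A g K)
    {u v : G} (hu : u ∈ A) (hv : v ∈ A) : (g u - 1) * K v = (g v - 1) * K u := by
  have huv := h u hu v hv
  rw [add_comm, h v hv u hu] at huv
  linear_combination huv

theorem exists_eq_mul_sub_one [AddCommMonoid G] [Field 𝕜] {A : AddSubmonoid G}
    (h : IsGoldieOn (A : Set G) g K) (hg0 : g 0 = 1) (hgA : ∀ u ∈ A, g u = 1 → u = 0)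
    (hK : ∃ u ∈ A, K u ≠ 0) : ∃ κ ≠ 0, ∀ v ∈ A, K v = κ * (g v - 1) := by
  obtain ⟨u₀, hu₀, hKu₀⟩ := hK
  have hgu₀ : g u₀ - 1 ≠ 0 := by
    refine sub_ne_zero.mpr fun hg1 => hKu₀ ?_
    rw [hgA u₀ hu₀ hg1]
    exact h.apply_zero A.zero_mem hg0
  refine ⟨K u₀ / (g u₀ - 1), div_ne_zero hKu₀ hgu₀, fun v hv => ?_⟩
  rw [div_mul_eq_mul_div, eq_div_iff hgu₀, mul_comm, h.sub_one_mul_comm hu₀ hv, mul_comm]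

theorem map_add_eq_mul [AddCommMonoid G] [Field 𝕜] {A : AddSubmonoid G}
    (h : IsGoldieOn (A : Set G) g K) {κ : 𝕜} (hκ : κ ≠ 0) (hK : ∀ v ∈ A, K v = κ * (g v - 1))
    {u v : G} (hu : u ∈ A) (hv : v ∈ A) : g (u + v) = g u * g v := by
  have huv := h u hu v hv
  rw [hK _ (A.add_mem hu hv), hK u hu, hK v hv] at huv
  have : κ * (g (u + v) - g u * g v) = 0 := by linear_combination huv
  exact sub_eq_zero.mp ((mul_eq_zero.mp this).resolve_left hκ)

end IsGoldieOn

theorem map_add_eq_mul_of_dense {X M : Type*} [TopologicalSpace X] [Add X] [ContinuousAdd X]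
    [TopologicalSpace M] [Mul M] [ContinuousMul M] [T2Space M] {s : Set X} (hs : Dense s)
    {g : X → M} (hg : Continuous g) (hmul : ∀ u ∈ s, ∀ v ∈ s, g (u + v) = g u * g v) (x y : X) :
    g (x + y) = g x * g y := by
  have : (fun p : X × X => g (p.1 + p.2)) = fun p => g p.1 * g p.2 :=
    Continuous.ext_on (hs.prod hs) (by fun_prop) (by fun_prop) fun p hp => hmul _ hp.1 _ hp.2
  exact congrFun this (x, y)

theorem exists_eq_exp_mul_of_map_add_eq_mul_s3 {g : ℝ → ℝ} (hg : Continuous g) (hg0 : g 0 = 1)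
    (hmul : ∀ x y, g (x + y) = g x * g y) : ∃ a, ∀ x, g x = exp (a * x) := by
  have hne : ∀ x, g x ≠ 0 := fun x hx => by
    simpa [hx, hg0] using hmul x (-x)
  have hpos : ∀ x, 0 < g x := fun x => by
    simpa [← hmul] using mul_self_pos.mpr (hne (x / 2))
  let L : ℝ →+ ℝ := AddMonoidHom.mk' (fun x => log (g x)) fun x y => by
    rw [hmul, log_mul (hne x) (hne y)]
  have hL : Continuous L := hg.log hne
  refine ⟨L 1, fun x => ?_⟩
  have hlin : L x = x * L 1 := by simpa using map_real_smul L hL x 1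
  rw [mul_comm, ← hlin, AddMonoidHom.mk'_apply, exp_log (hpos x)]

theorem eq_of_tendsto_of_map_add_eq {β : Type*} [TopologicalSpace β] [T1Space β]
    {A : Set ℝ} (hA : Dense A) {E : ℝ → β} {c : β} (hE : Tendsto E (𝓝[>] 0) (𝓝 c))
    (hper : ∀ u ∈ A, ∀ v, 0 < v → E (u + v) = E v) (x : ℝ) : E x = c := by
  by_contra hx
  obtain ⟨δ, hδ, hsub⟩ := mem_nhdsGT_iff_exists_Ioo_subset.mp (hE.eventually_ne (Ne.symm hx))
  obtain ⟨u, hu, hxu, hux⟩ := hA.exists_between (sub_lt_self x hδ)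
  refine hsub ⟨sub_pos.mpr hux, by linarith⟩ ?_
  rw [← hper u hu _ (sub_pos.mpr hux), add_sub_cancel]

theorem eq_mul_sub_one_of_tendsto {A : Set ℝ} (hA : Dense A) {g F K : ℝ → ℝ} {κ : ℝ}
    (hg : Continuous g) (hg0 : g 0 = 1) (hmul : ∀ x y, g (x + y) = g x * g y)
    (hF0 : Tendsto F (𝓝[>] 0) (𝓝 0)) (hFK : ∀ u ∈ A, ∀ v, 0 < v → F (u + v) = g v * K u + F v)
    (hK : ∀ u ∈ A, K u = κ * (g u - 1)) (x : ℝ) : F x = κ * (g x - 1) := by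
  have hlim : Tendsto (fun x => F x - κ * (g x - 1)) (𝓝[>] 0) (𝓝 0) := by
    have hg' : Tendsto g (𝓝[>] 0) (𝓝 1) := hg0 ▸ hg.continuousWithinAt.tendsto
    simpa using hF0.sub ((hg'.sub_const 1).const_mul κ)
  have hper : ∀ u ∈ A, ∀ v, 0 < v →
      F (u + v) - κ * (g (u + v) - 1) = F v - κ * (g v - 1) := fun u hu v hv => by
    rw [hFK u hu v hv, hK u hu, hmul]
    ring
  exact sub_eq_zero.mp (eq_of_tendsto_of_map_add_eq hA hlim hper x)

theorem neg_of_subadditive_eq_mul_exp_sub_one {F : ℝ → ℝ} {κ a : ℝ}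
    (hF : ∀ x, F x = κ * (exp (a * x) - 1)) (hFpos : ∀ x : ℝ, 0 < x → 0 < F x)
    (hFsub : ∀ u v : ℝ, 0 < u → 0 < v → F (u + v) ≤ F u + F v) : κ < 0 ∧ a < 0 := by
  have h1 := hFpos 1 one_pos
  have h2 := hFsub 1 1 one_pos one_pos
  rw [hF, mul_one] at h1
  rw [hF, hF, show a * (1 + 1) = a + a by ring, exp_add, mul_one] at h2
  have hκ : κ < 0 := by
    rcases lt_trichotomy κ 0 with hκ | rfl | hκ
    · exact hκ
    · simp at h1
    · nlinarith [sq_pos_of_pos hκ]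
  refine ⟨hκ, exp_lt_one_iff.mp ?_⟩
  nlinarith

theorem Hrho_of_ne_zero {ρ : ℝ} (hρ : ρ ≠ 0) (t : ℝ) :
    Hrho ρ t = (1 - exp (-ρ * t)) / ρ :=
  if_neg hρ

theorem generalized_goldie_theorem_general
    (A : AddSubgroup ℝ) (hA : Dense (A : Set ℝ))
    (g : ℝ → ℝ) (hgcont : Continuous g) (hg0 : g 0 = 1)
    (hgA : {u : ℝ | u ∈ A ∧ g u = 1} = {0})
    (F K : ℝ → ℝ)
    (hFpos : ∀ x : ℝ, 0 < x → 0 < F x)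
    (hFsub : ∀ u v : ℝ, 0 < u → 0 < v → F (u + v) ≤ F u + F v)
    (hF0 : Filter.Tendsto F (nhdsWithin 0 (Set.Ioi 0)) (nhds 0))
    (hKne : ∃ u ∈ A, K u ≠ 0)
    (hKGoldie : ∀ u ∈ A, ∀ v ∈ A, K (u + v) = g v * K u + K v)
    (hFK : ∀ u ∈ A, ∀ v : ℝ, 0 < v → F (u + v) = g v * K u + F v) :
    ∃ c : ℝ, 0 < c ∧ ∃ ρ : ℝ, 0 ≤ ρ ∧
      (∀ x : ℝ, g x = Real.exp (-ρ * x)) ∧ (∀ x : ℝ, F x = c * Hrho ρ x) := by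
  have hGoldie : IsGoldieOn (A.toAddSubmonoid : Set ℝ) g K := hKGoldie
  obtain ⟨κ, hκ, hK⟩ :=
    hGoldie.exists_eq_mul_sub_one hg0 (fun u hu h1 => hgA.subset ⟨hu, h1⟩) hKne
  have hmul := map_add_eq_mul_of_dense hA hgcont fun u hu v hv =>
    hGoldie.map_add_eq_mul hκ hK hu hv
  obtain ⟨a, hga⟩ := exists_eq_exp_mul_of_map_add_eq_mul_s3 hgcont hg0 hmul
  have hF : ∀ x, F x = κ * (exp (a * x) - 1) := fun x => by
    rw [eq_mul_sub_one_of_tendsto hA hgcont hg0 hmul hF0 hFK hK x, hga]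
  obtain ⟨hκneg, hapos⟩ := neg_of_subadditive_eq_mul_exp_sub_one hF hFpos hFsub
  refine ⟨κ * a, mul_pos_of_neg_of_neg hκneg hapos, -a, by linarith, fun x => by simp [hga], ?_⟩
  intro x
  rw [hF, Hrho_of_ne_zero (neg_ne_zero.mpr hapos.ne), neg_neg]
  field_simp [hapos.ne]
  ring

theorem generalized_goldie_theorem
    (A : AddSubgroup ℝ) (hA : Dense (A : Set ℝ))
    (g : ℝ → ℝ) (hgcont : Continuous g) (hg0 : g 0 = 1)
    (hgA : {u : ℝ | u ∈ A ∧ g u = 1} = {0})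
    (F K : ℝ → ℝ)
    (hFpos : ∀ x : ℝ, 0 < x → 0 < F x)
    (hFsub : ∀ u v : ℝ, 0 < u → 0 < v → F (u + v) ≤ F u + F v)
    (hF0 : Filter.Tendsto F (nhdsWithin 0 (Set.Ioi 0)) (nhds 0))
    (hKne : ∃ u ∈ A, K u ≠ 0)
    (hKGoldie : ∀ u ∈ A, ∀ v ∈ A, K (u + v) = g v * K u + K v)
    (hFK : ∀ u ∈ A, ∀ v : ℝ, 0 < v → F (u + v) = g v * K u + F v)
    (hext : ∀ x ∈ A, F x = K x) :
    ∃ c : ℝ, 0 < c ∧ ∃ ρ : ℝ, 0 ≤ ρ ∧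
      (∀ x : ℝ, g x = Real.exp (-ρ * x)) ∧ (∀ x : ℝ, F x = c * Hrho ρ x) :=
  generalized_goldie_theorem_general A hA g hgcont hg0 hgA F K hFpos hFsub hF0 hKne hKGoldie hFK
end

section
/- Let A be a dense additive subgroup of ℝ, let g : ℝ → ℝ satisfy g(v) > 0 for all v > 0, and let K : ℝ → ℝ satisfy K(u) > 0 for every u ∈ A with u > 0. Suppose F* : ℝ → ℝ satisfies F*(u+v) ≤ F*(u) + F*(v) for all u, v > 0, F*(x) → 0 as x → 0⁺, and F*(u+v) = g(v)·K(u) + F*(v) for all u ∈ A and all v > 0. Then F* is strictly increasing on ℝ₊ and continuous on ℝ₊, and g is continuous on ℝ₊. -/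
theorem goldie_continuity_theorem
    (A : AddSubgroup ℝ) (hA : Dense (A : Set ℝ))
    (g K F : ℝ → ℝ)
    (hgpos : ∀ v : ℝ, 0 < v → 0 < g v)
    (hKpos : ∀ u : ℝ, u ∈ A → 0 < u → 0 < K u)
    (hFsub : ∀ u v : ℝ, 0 < u → 0 < v → F (u + v) ≤ F u + F v)
    (hF0 : Filter.Tendsto F (nhdsWithin 0 (Set.Ioi 0)) (nhds 0))
    (hFK : ∀ u ∈ A, ∀ v : ℝ, 0 < v → F (u + v) = g v * K u + F v) :
    StrictMonoOn F (Set.Ioi 0) ∧ ContinuousOn F (Set.Ioi 0) ∧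
      ContinuousOn g (Set.Ioi 0) := by
  -- small values of F are small
  have hsmall : ∀ ε : ℝ, 0 < ε → ∃ δ > 0, ∀ t : ℝ, 0 < t → t < δ → |F t| < ε := by
    intro ε hε
    rw [Metric.tendsto_nhdsWithin_nhds] at hF0
    obtain ⟨δ, hδ, h⟩ := hF0 ε hε
    refine ⟨δ, hδ, fun t ht htδ => ?_⟩
    have := h (Set.mem_Ioi.2 ht) (by simpa [Real.dist_eq, abs_of_pos ht] using htδ)
    simpa [Real.dist_eq] using this
  -- step relation
  have hstep : ∀ u ∈ A, 0 < u → ∀ v : ℝ, 0 < v → F v < F (u + v) := by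
    intro u hu hu0 v hv
    rw [hFK u hu v hv]
    nlinarith [hgpos v hv, hKpos u hu hu0]
  -- non-strict monotonicity
  have hmono : ∀ x y : ℝ, 0 < x → x < y → F x ≤ F y := by
    intro x y hx hxy
    by_contra hcon
    push_neg at hcon
    obtain ⟨δ, hδ, hsm⟩ := hsmall (F x - F y) (by linarith)
    have hlt : y - x < y - x + min δ x := by
      have : 0 < min δ x := lt_min hδ hx
      linarith
    obtain ⟨u, huA, hu1, hu2⟩ := hA.exists_between hlt
    set t := u - (y - x) with ht_def
    have ht0 : 0 < t := by simp only [ht_def]; linarith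
    have htδ : t < δ := by
      have := min_le_left δ x
      simp only [ht_def]; linarith
    have htx : t < x := by
      have := min_le_right δ x
      simp only [ht_def]; linarith
    have hxt : x - t = y - u := by simp only [ht_def]; ring
    have hyu : 0 < y - u := by rw [← hxt]; linarith
    have hu0 : 0 < u := by linarith
    have h1 : F x ≤ F (x - t) + F t := by
      have := hFsub (x - t) t (by linarith) ht0
      simpa using this
    have h2 : F y = g (y - u) * K u + F (y - u) := by
      have := hFK u huA (y - u) hyu
      simpa [add_sub_cancel] using this
    have h3 : F (y - u) < F y := by
      nlinarith [hgpos (y - u) hyu, hKpos u huA hu0]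
    have h4 : F t < F x - F y := (abs_lt.1 (hsm t ht0 htδ)).2
    rw [hxt] at h1
    linarith
  -- strict monotonicity
  have hsmono : ∀ x y : ℝ, 0 < x → x < y → F x < F y := by
    intro x y hx hxy
    obtain ⟨u, huA, hu1, hu2⟩ := hA.exists_between (show (0:ℝ) < y - x by linarith)
    have h1 : F x < F (u + x) := hstep u huA hu1 x hx
    have h2 : F (u + x) ≤ F y := hmono (u + x) y (by linarith) (by linarith)
    linarith
  have hFcont : ContinuousOn F (Set.Ioi 0) := by
    intro x hx
    rw [Metric.continuousWithinAt_iff]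
    intro ε hε
    obtain ⟨δ, hδ, hsm⟩ := hsmall ε hε
    refine ⟨δ, hδ, fun y hy hdist => ?_⟩
    have hy0 : 0 < y := hy
    have hx0 : 0 < x := hx
    rw [Real.dist_eq] at hdist ⊢
    rcases lt_trichotomy y x with h | h | h
    · have h1 : F y ≤ F x := le_of_lt (hsmono y x hy0 h)
      have h2 : F x ≤ F y + F (x - y) := by
        have := hFsub y (x - y) hy0 (by linarith)
        simpa [add_sub_cancel] using this
      have h3 : |F (x - y)| < ε := by
        apply hsm (x - y) (by linarith)
        rw [abs_sub_comm, abs_of_pos (by linarith : (0:ℝ) < x - y)] at hdist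
        linarith
      rw [abs_lt] at h3 ⊢
      constructor <;> linarith [h3.1, h3.2]
    · simp [h, hε]
    · have h1 : F x ≤ F y := le_of_lt (hsmono x y hx0 h)
      have h2 : F y ≤ F x + F (y - x) := by
        have := hFsub x (y - x) hx0 (by linarith)
        simpa [add_sub_cancel] using this
      have h3 : |F (y - x)| < ε := by
        apply hsm (y - x) (by linarith)
        rw [abs_of_pos (by linarith : (0:ℝ) < y - x)] at hdist
        linarith
      rw [abs_lt] at h3 ⊢
      constructor <;> linarith [h3.1, h3.2]
  have hgcont : ContinuousOn g (Set.Ioi 0) := by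
    obtain ⟨u₀, hu₀A, hu₀1, _⟩ := hA.exists_between (show (0:ℝ) < 1 by norm_num)
    have hKne : K u₀ ≠ 0 := (hKpos u₀ hu₀A hu₀1).ne'
    have hcomp : ContinuousOn (fun v => (F (u₀ + v) - F v) / K u₀) (Set.Ioi 0) := by
      apply ContinuousOn.div_const
      apply ContinuousOn.sub
      · exact hFcont.comp (continuous_const.add continuous_id).continuousOn
          (fun v hv => by simp only [Set.mem_Ioi] at hv ⊢; linarith)
      · exact hFcont
    refine hcomp.congr fun v hv => ?_
    have hv0 : 0 < v := hv
    have := hFK u₀ hu₀A v hv0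
    rw [eq_div_iff hKne]
    linarith
  exact ⟨fun x hx y hy hxy => hsmono x y hx hxy, hFcont, hgcont⟩
end

section
/- If φ : ℝ₊ → ℝ satisfies φ(x) > 0 for all x > 0 and the Beurling functional equation φ(v + u·φ(v)) = φ(u)·φ(v) for all u, v > 0, then φ(x) ≥ 1 for all x > 0. -/
theorem bfe_positive_solutions_ge_one
    (φ : ℝ → ℝ)
    (hpos : ∀ x : ℝ, 0 < x → 0 < φ x)
    (hBFE : ∀ u v : ℝ, 0 < u → 0 < v → φ (v + u * φ v) = φ u * φ v) :
    ∀ x : ℝ, 0 < x → 1 ≤ φ x := by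
  intro x hx
  by_contra h
  push_neg at h
  have h1 : 0 < 1 - φ x := by linarith
  set u := x / (1 - φ x) with hu_def
  have hu : 0 < u := div_pos hx h1
  have hfix : x + u * φ x = u := by
    rw [hu_def]
    field_simp
    ring
  have key := hBFE u x hu hx
  rw [hfix] at key
  have := hpos u hu
  nlinarith
end

section
/- Let φ : ℝ₊ → ℝ satisfy φ(t) ≥ 0 for all t > 0 and the Beurling functional equation φ(v + u·φ(v)) = φ(u)·φ(v) for all u, v > 0, and suppose there is δ > 0 such that φ(t) > 1 for all t ∈ (0, δ). Then φ is continuous on ℝ₊, strictly increasing on ℝ₊, and φ(t) > 1 for all t > 0. -/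
/-!
Writing `t = s + u φ(s)` turns the equation into `φ t = φ(u) φ(s)` with `u = (t - s)/φ(s) < t - s`
whenever `φ(s) > 1`. This propagates `φ > 1` from `(0, a)` to `(0, a + s)` for any `s ∈ (0, a)`,
hence to the whole half-line, and then `φ t / φ s = φ u > 1` gives strict monotonicity.
If `L` is the infimum of `φ`, the same identity with `s = t/2` shows that `L²` is a lower bound,
so `L = 1`; thus `φ(r) → 1` as `r → 0⁺`, and `|φ y - φ x| ≤ (φ r - 1) φ x` for `|y - x| ≤ r`
gives continuity.
-/

open Set

def IsBeurling (φ : ℝ → ℝ) : Prop :=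
  ∀ u v : ℝ, 0 < u → 0 < v → φ (v + u * φ v) = φ u * φ v

namespace IsBeurling

variable {φ : ℝ → ℝ}

theorem apply_eq_mul (hφ : IsBeurling φ) {s t : ℝ} (hs : 0 < s) (hst : s < t) (hφs : 0 < φ s) :
    φ t = φ ((t - s) / φ s) * φ s := by
  have h := hφ ((t - s) / φ s) s (div_pos (sub_pos.2 hst) hφs) hs
  rwa [div_mul_cancel₀ _ hφs.ne', add_sub_cancel] at h

theorem one_lt_on_Ioo_add (hφ : IsBeurling φ) {s a : ℝ} (hs : s ∈ Ioo 0 a) (hφs : 1 < φ s)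
    (h : ∀ t ∈ Ioo 0 a, 1 < φ t) : ∀ t ∈ Ioo 0 (a + s), 1 < φ t := by
  rintro t ⟨ht, hta⟩
  rcases le_or_gt t s with hts | hst
  · exact h t ⟨ht, hts.trans_lt hs.2⟩
  have hu : 1 < φ ((t - s) / φ s) :=
    h _ ⟨div_pos (sub_pos.2 hst) (by linarith), by linarith [div_lt_self (sub_pos.2 hst) hφs]⟩
  rw [hφ.apply_eq_mul hs.1 hst (by linarith)]
  nlinarith

theorem one_lt_of_one_lt_on_Ioo (hφ : IsBeurling φ) {δ : ℝ} (hδ : 0 < δ)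
    (h1 : ∀ t ∈ Ioo 0 δ, 1 < φ t) (t : ℝ) (ht : 0 < t) : 1 < φ t := by
  have hφs : 1 < φ (δ / 2) := h1 _ ⟨by linarith, by linarith⟩
  have hIoo : ∀ n : ℕ, ∀ t ∈ Ioo 0 (δ + n * (δ / 2)), 1 < φ t := by
    intro n
    induction n with
    | zero => simpa using h1
    | succ n ih =>
      have hs : δ / 2 ∈ Ioo 0 (δ + n * (δ / 2)) :=
        ⟨by linarith, by nlinarith [n.cast_nonneg' (α := ℝ)]⟩
      simpa [add_one_mul, add_assoc] using hφ.one_lt_on_Ioo_add hs hφs ih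
  obtain ⟨n, hn⟩ := exists_nat_gt (t / (δ / 2))
  exact hIoo n t ⟨ht, by rw [div_lt_iff₀ (by positivity)] at hn; linarith⟩

section OneLt

variable (hφ : IsBeurling φ) (hpos : ∀ t, 0 < t → 1 < φ t)
include hφ hpos

theorem strictMonoOn : StrictMonoOn φ (Ioi 0) := by
  intro s (hs : 0 < s) t _ hst
  have hφs := hpos s hs
  have hu := hpos _ (div_pos (sub_pos.2 hst) (by linarith : 0 < φ s))
  rw [hφ.apply_eq_mul hs hst (by linarith)]
  nlinarith

theorem sq_mem_lowerBounds {b : ℝ} (hb : b ∈ lowerBounds (φ '' Ioi 0)) (hb0 : 0 ≤ b) :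
    b ^ 2 ∈ lowerBounds (φ '' Ioi 0) := by
  rintro _ ⟨t, ht : 0 < t, rfl⟩
  have hv : 0 < t / 2 := by linarith
  have hφv := hpos _ hv
  have hu : 0 < (t - t / 2) / φ (t / 2) := div_pos (by linarith) (by linarith)
  rw [hφ.apply_eq_mul hv (by linarith) (by linarith), sq]
  exact mul_le_mul (hb ⟨_, hu, rfl⟩) (hb ⟨_, hv, rfl⟩) hb0 (by linarith [hpos _ hu])

theorem exists_lt_one_add {ε : ℝ} (hε : 0 < ε) : ∃ r > 0, φ r < 1 + ε := by
  have hne : (φ '' Ioi 0).Nonempty := ⟨_, 1, mem_Ioi.2 one_pos, rfl⟩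
  have hone : 1 ∈ lowerBounds (φ '' Ioi 0) := by
    rintro _ ⟨t, ht, rfl⟩
    exact (hpos t ht).le
  have hglb := isGLB_csInf hne ⟨1, hone⟩
  have h1L : 1 ≤ sInf (φ '' Ioi 0) := hglb.2 hone
  have hsq : sInf (φ '' Ioi 0) ^ 2 ≤ sInf (φ '' Ioi 0) :=
    hglb.2 (sq_mem_lowerBounds hφ hpos hglb.1 (by linarith))
  obtain ⟨_, ⟨r, hr, rfl⟩, hlt⟩ :=
    exists_lt_of_csInf_lt hne (show sInf (φ '' Ioi 0) < 1 + ε by nlinarith)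
  exact ⟨r, hr, hlt⟩

theorem sub_le_mul {s t r : ℝ} (hs : 0 < s) (hst : s < t) (hr : t - s ≤ r) :
    φ t - φ s ≤ (φ r - 1) * φ s := by
  have hφs := hpos s hs
  have hu : 0 < (t - s) / φ s := div_pos (sub_pos.2 hst) (by linarith)
  have hur : (t - s) / φ s ≤ r := (div_lt_self (sub_pos.2 hst) hφs).le.trans hr
  have hφur := (strictMonoOn hφ hpos).monotoneOn hu (hu.trans_le hur) hur
  rw [hφ.apply_eq_mul hs hst (by linarith)]
  nlinarith

theorem abs_sub_le_mul {x y r : ℝ} (hx : 0 < x) (hy : 0 < y) (hr : 0 < r) (hxy : |y - x| ≤ r) :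
    |φ y - φ x| ≤ (φ r - 1) * φ x := by
  have hφr := hpos r hr
  rcases lt_trichotomy y x with hlt | rfl | hgt
  · have hxyr : x - y ≤ r := by rwa [abs_sub_comm, abs_of_pos (sub_pos.2 hlt)] at hxy
    have hφxy := strictMonoOn hφ hpos hy hx hlt
    rw [abs_sub_comm, abs_of_pos (sub_pos.2 hφxy)]
    nlinarith [sub_le_mul hφ hpos hy hlt hxyr]
  · simp only [sub_self, abs_zero]
    nlinarith [hpos y hx]
  · have hyxr : y - x ≤ r := by rwa [abs_of_pos (sub_pos.2 hgt)] at hxy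
    rw [abs_of_pos (sub_pos.2 (strictMonoOn hφ hpos hx hy hgt))]
    exact sub_le_mul hφ hpos hx hgt hyxr

theorem continuousOn : ContinuousOn φ (Ioi 0) := by
  intro x (hx : 0 < x)
  rw [Metric.continuousWithinAt_iff]
  intro ε hε
  have hφx := hpos x hx
  obtain ⟨r, hr, hφr⟩ := exists_lt_one_add hφ hpos (div_pos hε (by linarith : 0 < φ x))
  refine ⟨r, hr, fun {y} (hy : 0 < y) hyx => ?_⟩
  rw [Real.dist_eq] at hyx ⊢
  calc |φ y - φ x| ≤ (φ r - 1) * φ x := abs_sub_le_mul hφ hpos hx hy hr hyx.le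
    _ < ε / φ x * φ x := by gcongr; linarith
    _ = ε := div_mul_cancel₀ ε (by linarith)

end OneLt

end IsBeurling

theorem bfe_above_one_near_zero_implies_increasing_general
    (φ : ℝ → ℝ) (δ : ℝ) (hδ : 0 < δ)
    (hBFE : ∀ u v : ℝ, 0 < u → 0 < v → φ (v + u * φ v) = φ u * φ v)
    (h1 : ∀ t ∈ Set.Ioo (0 : ℝ) δ, 1 < φ t) :
    ContinuousOn φ (Set.Ioi 0) ∧ StrictMonoOn φ (Set.Ioi 0) ∧
      ∀ t : ℝ, 0 < t → 1 < φ t := by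
  have hφ : IsBeurling φ := hBFE
  have hpos := hφ.one_lt_of_one_lt_on_Ioo hδ h1
  exact ⟨hφ.continuousOn hpos, hφ.strictMonoOn hpos, hpos⟩

theorem bfe_above_one_near_zero_implies_increasing
    (φ : ℝ → ℝ) (δ : ℝ) (hδ : 0 < δ)
    (hnonneg : ∀ t : ℝ, 0 < t → 0 ≤ φ t)
    (hBFE : ∀ u v : ℝ, 0 < u → 0 < v → φ (v + u * φ v) = φ u * φ v)
    (h1 : ∀ t ∈ Set.Ioo (0 : ℝ) δ, 1 < φ t) :
    ContinuousOn φ (Set.Ioi 0) ∧ StrictMonoOn φ (Set.Ioi 0) ∧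
      ∀ t : ℝ, 0 < t → 1 < φ t :=
  bfe_above_one_near_zero_implies_increasing_general φ δ hδ hBFE h1
end

section
/- If φ : ℝ₊ → ℝ satisfies φ(t) > 0 for all t > 0 and the Beurling functional equation φ(v + u·φ(v)) = φ(u)·φ(v) for all u, v > 0, then φ is continuous on ℝ₊, and either φ(t) > 1 for all t > 0, or φ(t) = 1 for all t > 0. -/
/-!
A positive solution satisfies `φ ≥ 1`: if `φ t < 1`, then `u = t / (1 - φ t)` solves
`t + u φ t = u`, and the equation gives `φ u = φ u φ t`. Writing the equation as
`φ (v + s) = φ (s / φ v) φ v` then shows that `φ` is monotone and that `φ (0+) = 1`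
(a lower bound `c > 1` would propagate to `c ^ n` by halving), and these two facts give
continuity from both sides. Finally `φ a = 1` forces `φ (2a) = φ a ^ 2 = 1`, so by
monotonicity `φ = 1` on arbitrarily long intervals `(0, 2ⁿ a]`.
-/

open Set Filter Topology

structure IsPositiveBFESolution (φ : ℝ → ℝ) : Prop where
  pos : ∀ x : ℝ, 0 < x → 0 < φ x
  apply_add_mul : ∀ u v : ℝ, 0 < u → 0 < v → φ (v + u * φ v) = φ u * φ v

namespace IsPositiveBFESolution

variable {φ : ℝ → ℝ}

theorem one_le (h : IsPositiveBFESolution φ) {t : ℝ} (ht : 0 < t) : 1 ≤ φ t := by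
  by_contra! hlt
  have hgap : 0 < 1 - φ t := by linarith
  set u := t / (1 - φ t)
  have hu : 0 < u := div_pos ht hgap
  have hfix : t + u * φ t = u := by
    simp only [u]; field_simp; ring
  have heq := h.apply_add_mul u t hu ht
  rw [hfix] at heq
  nlinarith [h.pos u hu]

theorem apply_add (h : IsPositiveBFESolution φ) {v s : ℝ} (hv : 0 < v) (hs : 0 < s) :
    φ (v + s) = φ (s / φ v) * φ v := by
  have hφv := h.pos v hv
  rw [← h.apply_add_mul _ v (div_pos hs hφv) hv, div_mul_cancel₀ s hφv.ne']

theorem monotoneOn (h : IsPositiveBFESolution φ) : MonotoneOn φ (Ioi 0) := by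
  intro v (hv : 0 < v) x _ hvx
  rcases hvx.eq_or_lt with rfl | hlt
  · rfl
  · have hφv := h.pos v hv
    have hstep := h.apply_add hv (sub_pos.2 hlt)
    rw [add_sub_cancel] at hstep
    rw [hstep]
    exact le_mul_of_one_le_left hφv.le (h.one_le (div_pos (sub_pos.2 hlt) hφv))

theorem pow_le_of_forall_le (h : IsPositiveBFESolution φ) {c : ℝ} (hc : 0 ≤ c)
    (hle : ∀ t, 0 < t → c ≤ φ t) (n : ℕ) {t : ℝ} (ht : 0 < t) : c ^ n ≤ φ t := by
  induction n generalizing t with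
  | zero => simpa using h.one_le ht
  | succ n ih =>
    have hhalf : 0 < t / 2 := half_pos ht
    have hsplit := h.apply_add hhalf hhalf
    rw [add_halves] at hsplit
    have hc_le := hle _ (div_pos hhalf (h.pos _ hhalf))
    rw [hsplit, pow_succ']
    exact mul_le_mul hc_le (ih hhalf) (by positivity) (hc.trans hc_le)

theorem tendsto_nhdsGT_zero (h : IsPositiveBFESolution φ) : Tendsto φ (𝓝[>] 0) (𝓝 1) := by
  refine tendsto_order.2 ⟨fun a ha => ?_, fun a ha => ?_⟩
  · filter_upwards [self_mem_nhdsWithin] with t ht using ha.trans_le (h.one_le ht)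
  · obtain ⟨s, hs, hφs⟩ : ∃ s, 0 < s ∧ φ s < a := by
      by_contra! hle
      obtain ⟨n, hn⟩ := pow_unbounded_of_one_lt (φ 1) ha
      exact hn.not_ge (h.pow_le_of_forall_le (by linarith) hle n one_pos)
    filter_upwards [Ioo_mem_nhdsGT hs] with t ht
    exact (h.monotoneOn ht.1 hs ht.2.le).trans_lt hφs

theorem continuousWithinAt_Ioi (h : IsPositiveBFESolution φ) {v : ℝ} (hv : 0 < v) :
    ContinuousWithinAt φ (Ioi v) v := by
  have hφv := h.pos v hv
  have hlim : Tendsto (fun y => (y - v) / φ v) (𝓝[>] v) (𝓝[>] 0) := by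
    refine tendsto_nhdsWithin_iff.2 ⟨?_, ?_⟩
    · have : Tendsto (fun y => (y - v) / φ v) (𝓝 v) (𝓝 ((v - v) / φ v)) :=
        (tendsto_id.sub tendsto_const_nhds).div_const _
      simpa using this.mono_left nhdsWithin_le_nhds
    · filter_upwards [self_mem_nhdsWithin] with y (hy : v < y)
      exact div_pos (sub_pos.2 hy) hφv
  have hprod := (h.tendsto_nhdsGT_zero.comp hlim).mul_const (φ v)
  rw [one_mul] at hprod
  refine hprod.congr' ?_
  filter_upwards [self_mem_nhdsWithin] with y (hy : v < y)
  simpa using (h.apply_add hv (sub_pos.2 hy)).symm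

theorem continuousWithinAt_Iio (h : IsPositiveBFESolution φ) {v : ℝ} (hv : 0 < v) :
    ContinuousWithinAt φ (Iio v) v := by
  have hbounds : ∀ᶠ y in 𝓝[<] v, 0 < (v - y) / φ y ∧ (v - y) / φ y ≤ v - y := by
    filter_upwards [Ioo_mem_nhdsLT hv] with y hy
    exact ⟨div_pos (sub_pos.2 hy.2) (h.pos y hy.1),
      div_le_self (sub_pos.2 hy.2).le (h.one_le hy.1)⟩
  have hlim : Tendsto (fun y => (v - y) / φ y) (𝓝[<] v) (𝓝[>] 0) := by
    refine tendsto_nhdsWithin_iff.2 ⟨?_, hbounds.mono fun y hy => hy.1⟩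
    have hsub : Tendsto (fun y => v - y) (𝓝[<] v) (𝓝 0) := by
      have : Tendsto (fun y => v - y) (𝓝 v) (𝓝 (v - v)) := tendsto_const_nhds.sub tendsto_id
      simpa using this.mono_left nhdsWithin_le_nhds
    exact tendsto_of_tendsto_of_tendsto_of_le_of_le' tendsto_const_nhds hsub
      (hbounds.mono fun y hy => hy.1.le) (hbounds.mono fun y hy => hy.2)
  have hquot : Tendsto (fun y => φ v / φ ((v - y) / φ y)) (𝓝[<] v) (𝓝 (φ v / 1)) :=
    tendsto_const_nhds.div (h.tendsto_nhdsGT_zero.comp hlim) one_ne_zero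
  rw [div_one] at hquot
  refine hquot.congr' ?_
  filter_upwards [Ioo_mem_nhdsLT hv, hbounds] with y hy hy_bounds
  have hsplit := h.apply_add hy.1 (sub_pos.2 hy.2)
  rw [add_sub_cancel] at hsplit
  rw [hsplit, mul_div_cancel_left₀ _ (h.pos _ hy_bounds.1).ne']

theorem continuousOn (h : IsPositiveBFESolution φ) : ContinuousOn φ (Ioi 0) :=
  continuousOn_of_forall_continuousAt fun _ hv =>
    continuousAt_iff_continuous_left'_right'.2
      ⟨h.continuousWithinAt_Iio hv, h.continuousWithinAt_Ioi hv⟩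

theorem apply_two_pow_mul_eq_one (h : IsPositiveBFESolution φ) {a : ℝ} (ha : 0 < a)
    (hφa : φ a = 1) (n : ℕ) : φ (2 ^ n * a) = 1 := by
  induction n with
  | zero => simpa using hφa
  | succ n ih =>
    have hpos : 0 < 2 ^ n * a := by positivity
    have hdouble := h.apply_add_mul _ _ hpos hpos
    rwa [ih, mul_one, mul_one, ← two_mul, ← mul_assoc, ← pow_succ'] at hdouble

theorem eq_one_of_apply_eq_one (h : IsPositiveBFESolution φ) {a : ℝ} (ha : 0 < a)
    (hφa : φ a = 1) {t : ℝ} (ht : 0 < t) : φ t = 1 := by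
  obtain ⟨n, hn⟩ := pow_unbounded_of_one_lt (t / a) one_lt_two
  have htn : t ≤ 2 ^ n * a := ((div_lt_iff₀ ha).1 hn).le
  refine le_antisymm ?_ (h.one_le ht)
  rw [← h.apply_two_pow_mul_eq_one ha hφa n]
  exact h.monotoneOn ht (show (0 : ℝ) < 2 ^ n * a by positivity) htn

end IsPositiveBFESolution

theorem bfe_positive_solutions_dichotomy
    (φ : ℝ → ℝ)
    (hpos : ∀ x : ℝ, 0 < x → 0 < φ x)
    (hBFE : ∀ u v : ℝ, 0 < u → 0 < v → φ (v + u * φ v) = φ u * φ v) :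
    ContinuousOn φ (Set.Ioi 0) ∧
      ((∀ t : ℝ, 0 < t → 1 < φ t) ∨ (∀ t : ℝ, 0 < t → φ t = 1)) := by
  have h : IsPositiveBFESolution φ := ⟨hpos, hBFE⟩
  refine ⟨h.continuousOn, or_iff_not_imp_left.2 fun hnot => ?_⟩
  obtain ⟨a, ha, hφa⟩ : ∃ a, 0 < a ∧ φ a ≤ 1 := by simpa using hnot
  exact fun t ht => h.eq_one_of_apply_eq_one ha (hφa.antisymm (h.one_le ha)) ht
end

section
/- Let φ : ℝ₊ → ℝ satisfy φ(t) ≥ 0 for all t > 0 and the Beurling functional equation φ(v + u·φ(v)) = φ(u)·φ(v) for all u, v > 0, and suppose there is δ > 0 such that φ(t) > 1 for all t ∈ (0, δ). Then there exists a constant c > 0 such that φ(t) = 1 + c·t for all t > 0. -/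
theorem bfe_above_one_near_zero_implies_linear
    (φ : ℝ → ℝ) (δ : ℝ) (hδ : 0 < δ)
    (hnonneg : ∀ t : ℝ, 0 < t → 0 ≤ φ t)
    (hBFE : ∀ u v : ℝ, 0 < u → 0 < v → φ (v + u * φ v) = φ u * φ v)
    (h1 : ∀ t ∈ Set.Ioo (0 : ℝ) δ, 1 < φ t) :
    ∃ c : ℝ, 0 < c ∧ ∀ t : ℝ, 0 < t → φ t = 1 + c * t := by
  -- Step 1: φ > 1 on (0, (n+1)δ) for every n, by induction.
  have key : ∀ n : ℕ, ∀ t : ℝ, 0 < t → t < (n + 1 : ℝ) * δ → 1 < φ t := by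
    intro n
    induction n with
    | zero =>
      intro t ht htδ
      exact h1 t ⟨ht, by push_cast at htδ; linarith⟩
    | succ n ih =>
      intro t ht htδ
      by_cases hcase : t < (n + 1 : ℝ) * δ
      · exact ih t ht hcase
      · push_neg at hcase
        have hnδ : (0:ℝ) ≤ (n:ℝ) * δ := by positivity
        have htd : (0:ℝ) ≤ t - δ := by nlinarith
        set v : ℝ := ((t - δ) + (n + 1 : ℝ) * δ) / 2 with hv
        have hv0 : 0 < v := by
          have : (0:ℝ) < (n + 1 : ℝ) * δ := by positivity
          rw [hv]; linarith
        have hv1 : v < (n + 1 : ℝ) * δ := by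
          rw [hv]; push_cast at htδ; linarith
        have hv2 : t - δ < v := by rw [hv]; linarith
        have hvt : v < t := lt_of_lt_of_le hv1 hcase
        have hφv : 1 < φ v := ih v hv0 hv1
        have hφv0 : 0 < φ v := by linarith
        set u : ℝ := (t - v) / φ v with hu
        have hu0 : 0 < u := div_pos (by linarith) hφv0
        have huδ : u < δ := by
          have h3 : u < t - v := div_lt_self (by linarith) hφv
          linarith
        have hφu : 1 < φ u := h1 u ⟨hu0, huδ⟩
        have ht' : v + u * φ v = t := by
          rw [hu, div_mul_cancel₀ _ (ne_of_gt hφv0)]; ring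
        have := hBFE u v hu0 hv0
        rw [ht'] at this
        rw [this]
        nlinarith
  have hall : ∀ t : ℝ, 0 < t → 1 < φ t := by
    intro t ht
    obtain ⟨n, hn⟩ := exists_nat_gt (t / δ)
    refine key n t ht ?_
    have : t < (n:ℝ) * δ := by
      rw [div_lt_iff₀ hδ] at hn; linarith
    nlinarith
  -- Step 2: φ strictly increasing on positives
  have hmono : ∀ v w : ℝ, 0 < v → v < w → φ v < φ w := by
    intro v w hv hvw
    have hφv : 1 < φ v := hall v hv
    have hφv0 : 0 < φ v := by linarith
    set u : ℝ := (w - v) / φ v with hu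
    have hu0 : 0 < u := div_pos (by linarith) hφv0
    have hw' : v + u * φ v = w := by
      rw [hu, div_mul_cancel₀ _ (ne_of_gt hφv0)]; ring
    have := hBFE u v hu0 hv
    rw [hw'] at this
    rw [this]
    have hφu : 1 < φ u := hall u hu0
    nlinarith
  -- Step 3: linearity
  refine ⟨φ 1 - 1, by have := hall 1 one_pos; linarith, ?_⟩
  intro t ht
  have hφ1 : 1 < φ 1 := hall 1 one_pos
  have hφt : 1 < φ t := hall t ht
  have e1 := hBFE 1 t one_pos ht
  have e2 := hBFE t 1 ht one_pos
  have heq : φ (t + 1 * φ t) = φ (1 + t * φ 1) := by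
    rw [e1, e2]; ring
  have ha : 0 < t + 1 * φ t := by nlinarith
  have hb : 0 < 1 + t * φ 1 := by nlinarith
  have harg : t + 1 * φ t = 1 + t * φ 1 := by
    by_contra hne
    rcases lt_or_gt_of_ne hne with h | h
    · have := hmono _ _ ha h; linarith [heq ▸ this]
    · have := hmono _ _ hb h; linarith [heq ▸ this]
  linarith
end

section
/- Let λ : [0,∞) → ℝ be continuous and nonnegative with λ(0) = 1, satisfying the Beurling functional equation λ(v + u·λ(v)) = λ(u)·λ(v) for all u, v > 0, and suppose that its level set L₊(λ) := {t > 0 : λ(t) > 1} contains an interval (0, δ) for some δ > 0. Then λ is differentiable on (0,∞) and right-differentiable at 0, and there exists ρ > 0 such that λ(t) = 1 + ρ·t for all t ≥ 0. -/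
theorem bfe_continuous_solution_is_affine
    (lam : ℝ → ℝ) (δ : ℝ) (hδ : 0 < δ)
    (hcont : ContinuousOn lam (Set.Ici 0))
    (hnonneg : ∀ t : ℝ, 0 ≤ t → 0 ≤ lam t)
    (h0 : lam 0 = 1)
    (hBFE : ∀ u v : ℝ, 0 < u → 0 < v → lam (v + u * lam v) = lam u * lam v)
    (hlevel : ∀ t ∈ Set.Ioo (0 : ℝ) δ, 1 < lam t) :
    (∀ x : ℝ, 0 < x → DifferentiableAt ℝ lam x) ∧
    (∃ d : ℝ, HasDerivWithinAt lam d (Set.Ici 0) 0) ∧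
    (∃ ρ : ℝ, 0 < ρ ∧ ∀ t : ℝ, 0 ≤ t → lam t = 1 + ρ * t) := by
  -- Step 1: lam > 1 on all of (0, ∞)
  have key : ∀ n : ℕ, ∀ t : ℝ, 0 < t → t < ((n : ℝ) + 1) * δ → 1 < lam t := by
    intro n
    induction n with
    | zero =>
      intro t ht h
      exact hlevel t ⟨ht, by push_cast at h; linarith⟩
    | succ n ih =>
      intro t ht hlt
      by_cases hc : t < ((n : ℝ) + 1) * δ
      · exact ih t ht hc
      push_neg at hc
      push_cast at hlt
      set u : ℝ := ((t - δ) + ((n : ℝ) + 1) * δ) / 2 with hu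
      have hn0 : (0 : ℝ) ≤ (n : ℝ) := Nat.cast_nonneg n
      have hu0 : 0 < u := by
        have h1 : (n : ℝ) * δ ≤ t - δ := by nlinarith
        have h2 : 0 < ((n : ℝ) + 1) * δ := by nlinarith
        have h3 : 0 ≤ (n : ℝ) * δ := by nlinarith
        rw [hu]; linarith
      have hut : u < t := by rw [hu]; nlinarith
      have hulb : u < ((n : ℝ) + 1) * δ := by rw [hu]; nlinarith
      have hgap : t - u < δ := by rw [hu]; nlinarith
      have hlu : 1 < lam u := ih u hu0 hulb
      set s : ℝ := (t - u) / lam u with hs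
      have hs0 : 0 < s := div_pos (by linarith) (by linarith)
      have hsδ : s < δ := by
        have : s < t - u := div_lt_self (by linarith) hlu
        linarith
      have harg : u + s * lam u = t := by
        rw [hs, div_mul_cancel₀ _ (by linarith : lam u ≠ 0)]; ring
      have hbfe := hBFE s u hs0 hu0
      rw [harg] at hbfe
      have hls : 1 < lam s := hlevel s ⟨hs0, hsδ⟩
      nlinarith
  have pos : ∀ t : ℝ, 0 < t → 1 < lam t := by
    intro t ht
    obtain ⟨n, hn⟩ := exists_nat_gt (t / δ)
    have : t < (n : ℝ) * δ := (div_lt_iff₀ hδ).mp hn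
    exact key n t ht (by nlinarith)
  -- Step 2: strict monotonicity on (0, ∞)
  have hmono : ∀ a b : ℝ, 0 < a → a < b → lam a < lam b := by
    intro a b ha hab
    have hla : 1 < lam a := pos a ha
    set s : ℝ := (b - a) / lam a with hs
    have hs0 : 0 < s := div_pos (by linarith) (by linarith)
    have harg : a + s * lam a = b := by
      rw [hs, div_mul_cancel₀ _ (by linarith : lam a ≠ 0)]; ring
    have hbfe := hBFE s a hs0 ha
    rw [harg] at hbfe
    have hls : 1 < lam s := pos s hs0
    nlinarith
  -- Step 3: lam is affine on (0, ∞)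
  set ρ : ℝ := lam 1 - 1 with hρdef
  have hρ : 0 < ρ := by have := pos 1 one_pos; rw [hρdef]; linarith
  have hform : ∀ u : ℝ, 0 < u → lam u = 1 + ρ * u := by
    intro u hu
    have h1 := hBFE u 1 hu one_pos
    have h2 := hBFE 1 u one_pos hu
    have heq : lam (1 + u * lam 1) = lam (u + 1 * lam u) := by
      rw [h1, h2, mul_comm]
    have hl1 : 1 < lam 1 := pos 1 one_pos
    have hlu : 1 < lam u := pos u hu
    have hp1 : 0 < 1 + u * lam 1 := by nlinarith
    have hp2 : 0 < u + 1 * lam u := by nlinarith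
    have harg : 1 + u * lam 1 = u + 1 * lam u := by
      rcases lt_trichotomy (1 + u * lam 1) (u + 1 * lam u) with h | h | h
      · exact absurd heq (ne_of_lt (hmono _ _ hp1 h))
      · exact h
      · exact absurd heq.symm (ne_of_lt (hmono _ _ hp2 h))
    rw [hρdef]; nlinarith [harg]
  have hfin : ∀ t : ℝ, 0 ≤ t → lam t = 1 + ρ * t := by
    intro t ht
    rcases eq_or_lt_of_le ht with h | h
    · rw [← h, h0]; ring
    · exact hform t h
  -- Differentiability
  have haff : ∀ x : ℝ, HasDerivAt (fun t : ℝ => 1 + ρ * t) ρ x := by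
    intro x
    simpa using (((hasDerivAt_id x).const_mul ρ).const_add 1)
  refine ⟨?_, ⟨ρ, ?_⟩, ⟨ρ, hρ, hfin⟩⟩
  · intro x hx
    have hev : lam =ᶠ[nhds x] fun t : ℝ => 1 + ρ * t := by
      filter_upwards [Ioi_mem_nhds hx] with t ht
      exact hfin t (le_of_lt ht)
    exact ((haff x).congr_of_eventuallyEq hev).differentiableAt
  · exact (haff 0).hasDerivWithinAt.congr (fun y hy => hfin y hy)
      (by rw [h0]; ring)
end

section
/- Let f : ℝ₊ → ℝ satisfy f(x) > 0 for all x > 0 and the Beurling functional equation f(v + u·f(v)) = f(u)·f(v) for all u, v > 0. If f(x) ≠ 1 for every x > 0, then there exists c > 0 such that f(x) = 1 + c·x for all x > 0. -/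
theorem bfe_never_one_implies_affine
    (f : ℝ → ℝ)
    (hpos : ∀ x : ℝ, 0 < x → 0 < f x)
    (hBFE : ∀ u v : ℝ, 0 < u → 0 < v → f (v + u * f v) = f u * f v)
    (hne : ∀ x : ℝ, 0 < x → f x ≠ 1) :
    ∃ c : ℝ, 0 < c ∧ ∀ x : ℝ, 0 < x → f x = 1 + c * x := by
  -- Step 1: f has no global positive period
  have hnoper : ∀ q : ℝ, 0 < q → ∃ x : ℝ, 0 < x ∧ f (x + q) ≠ f x := by
    intro q hq
    by_contra h
    push_neg at h
    have hf1 : 0 < f 1 := hpos 1 one_pos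
    have hu : 0 < q / f 1 := div_pos hq hf1
    have e := hBFE (q / f 1) 1 hu one_pos
    rw [div_mul_cancel₀ _ (ne_of_gt hf1), h 1 one_pos] at e
    have : f (q / f 1) = 1 :=
      mul_right_cancel₀ (ne_of_gt hf1) (by rw [one_mul]; exact e.symm)
    exact hne _ hu this
  -- Step 2: injectivity
  have hinjlt : ∀ a b : ℝ, 0 < a → 0 < b → a < b → f a ≠ f b := by
    intro a b ha hb hab heq
    have hta : 0 < f a := hpos a ha
    set q := (b - a) / f a with hqdef
    have hq : 0 < q := div_pos (by linarith) hta
    have hper : ∀ x : ℝ, 0 < x → f (x + q) = f x := by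
      intro x hx
      have e1 := hBFE (x + q) a (by linarith) ha
      have e2 := hBFE x b hx hb
      have harg : a + (x + q) * f a = b + x * f b := by
        rw [← heq, hqdef]
        field_simp
        ring
      rw [harg, e2, ← heq] at e1
      exact (mul_right_cancel₀ (ne_of_gt hta) e1).symm
    obtain ⟨x, hx, hxne⟩ := hnoper q hq
    exact hxne (hper x hx)
  have hinj : ∀ a b : ℝ, 0 < a → 0 < b → f a = f b → a = b := by
    intro a b ha hb heq
    rcases lt_trichotomy a b with h | h | h
    · exact absurd heq (hinjlt a b ha hb h)
    · exact h
    · exact absurd heq.symm (hinjlt b a hb ha h)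
  -- Step 3: symmetry gives affine form
  have hsym : ∀ u v : ℝ, 0 < u → 0 < v → v + u * f v = u + v * f u := by
    intro u v hu hv
    have h1 := hBFE u v hu hv
    have h2 := hBFE v u hv hu
    have hfv : 0 < f v := hpos v hv
    have hfu : 0 < f u := hpos u hu
    have h3 : f (v + u * f v) = f (u + v * f u) := by rw [h1, h2, mul_comm]
    exact hinj _ _ (by positivity) (by positivity) h3
  set c := f 1 - 1 with hc
  have hform : ∀ x : ℝ, 0 < x → f x = 1 + c * x := by
    intro x hx
    have := hsym x 1 hx one_pos
    -- 1 + x * f 1 = x + 1 * f x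
    rw [hc]; nlinarith [this]
  have hcne : c ≠ 0 := by
    have := hne 1 one_pos
    simp [hc]
    intro h; exact this (by linarith)
  have hcpos : 0 < c := by
    rcases hcne.lt_or_gt with h | h
    · exfalso
      have hx : 0 < 1 / -c := one_div_pos.mpr (by linarith)
      have h0 := hpos _ hx
      rw [hform _ hx] at h0
      have : c * (1 / -c) = -1 := by field_simp
      linarith
    · exact h
  exact ⟨c, hcpos, hform⟩
end

section
/- Let f : ℝ₊ → ℝ satisfy f(x) > 0 for all x > 0 and the Beurling functional equation f(v + u·f(v)) = f(u)·f(v) for all u, v > 0, and suppose f(a) = 1 for some a > 0. Then the range set R_f := {f(x) : x > 0} is a subgroup of the multiplicative group of positive reals: 1 ∈ R_f, R_f is closed under multiplication, and for every w ∈ R_f also w⁻¹ ∈ R_f. -/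
/-! If `f a = 1`, the equation with `v = a` makes `a` a period of `f`, so `f = 1` at every
`(n + 1) a`. Given `x > 0`, pick such a point `b > x`; solving `x + y f(x) = b` for `y > 0`
gives `f(y) f(x) = f(b) = 1`. -/

section Beurling

variable {f : ℝ → ℝ} {a : ℝ}

theorem bfe_add_period_of_eq_one
    (hBFE : ∀ u v : ℝ, 0 < u → 0 < v → f (v + u * f v) = f u * f v)
    (ha : 0 < a) (hfa : f a = 1) {u : ℝ} (hu : 0 < u) : f (a + u) = f u := by
  simpa [hfa] using hBFE u a hu ha

theorem bfe_natCast_add_one_mul_eq_one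
    (hBFE : ∀ u v : ℝ, 0 < u → 0 < v → f (v + u * f v) = f u * f v)
    (ha : 0 < a) (hfa : f a = 1) (n : ℕ) : f ((n + 1) * a) = 1 := by
  induction n with
  | zero => simpa using hfa
  | succ n ih =>
    calc f ((↑(n + 1) + 1) * a) = f (a + (n + 1) * a) := by push_cast; ring_nf
      _ = 1 := by rw [bfe_add_period_of_eq_one hBFE ha hfa (by positivity), ih]

theorem bfe_exists_gt_eq_one
    (hBFE : ∀ u v : ℝ, 0 < u → 0 < v → f (v + u * f v) = f u * f v)
    (ha : 0 < a) (hfa : f a = 1) (x : ℝ) : ∃ b, x < b ∧ f b = 1 := by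
  obtain ⟨n, hn⟩ := exists_nat_gt (x / a)
  refine ⟨(n + 1) * a, ?_, bfe_natCast_add_one_mul_eq_one hBFE ha hfa n⟩
  calc x < n * a := (div_lt_iff₀ ha).mp hn
    _ ≤ (n + 1) * a := by gcongr; linarith

theorem bfe_apply_div_mul_of_lt
    (hpos : ∀ x : ℝ, 0 < x → 0 < f x)
    (hBFE : ∀ u v : ℝ, 0 < u → 0 < v → f (v + u * f v) = f u * f v)
    {x b : ℝ} (hx : 0 < x) (hxb : x < b) : f ((b - x) / f x) * f x = f b := by
  have hfx := hpos x hx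
  rw [← hBFE _ x (div_pos (sub_pos.2 hxb) hfx) hx, div_mul_cancel₀ _ hfx.ne', add_sub_cancel]

end Beurling

theorem bfe_range_is_multiplicative_subgroup
    (f : ℝ → ℝ) (a : ℝ) (ha : 0 < a)
    (hpos : ∀ x : ℝ, 0 < x → 0 < f x)
    (hBFE : ∀ u v : ℝ, 0 < u → 0 < v → f (v + u * f v) = f u * f v)
    (hfa : f a = 1) :
    (1 ∈ {w : ℝ | ∃ x : ℝ, 0 < x ∧ w = f x}) ∧
    (∀ w₁ ∈ {w : ℝ | ∃ x : ℝ, 0 < x ∧ w = f x},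
      ∀ w₂ ∈ {w : ℝ | ∃ x : ℝ, 0 < x ∧ w = f x},
        w₁ * w₂ ∈ {w : ℝ | ∃ x : ℝ, 0 < x ∧ w = f x}) ∧
    (∀ w ∈ {w : ℝ | ∃ x : ℝ, 0 < x ∧ w = f x},
      w⁻¹ ∈ {w : ℝ | ∃ x : ℝ, 0 < x ∧ w = f x}) := by
  refine ⟨⟨a, ha, hfa.symm⟩, ?_, ?_⟩
  · rintro _ ⟨u, hu, rfl⟩ _ ⟨v, hv, rfl⟩
    exact ⟨v + u * f v, by have := hpos v hv; positivity, (hBFE u v hu hv).symm⟩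
  · rintro _ ⟨x, hx, rfl⟩
    obtain ⟨b, hxb, hfb⟩ := bfe_exists_gt_eq_one hBFE ha hfa x
    have hinv := bfe_apply_div_mul_of_lt hpos hBFE hx hxb
    rw [hfb] at hinv
    exact ⟨_, div_pos (sub_pos.2 hxb) (hpos x hx), (eq_inv_of_mul_eq_one_left hinv).symm⟩
end

section
/- Let f : ℝ₊ → ℝ satisfy f(x) > 0 for all x > 0 and the Beurling functional equation f(v + u·f(v)) = f(u)·f(v) for all u, v > 0, and suppose f(a) = 1 for some a > 0. Then for every w in the range set R_f := {f(x) : x > 0}, one has f(w·a) = 1. -/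
/-!
Putting `v = a` in the equation shows that `a` is a period of `f` on `(0, ∞)`. Putting `v = x`,
the equation reads `f (x + u f(x)) = f u · f x`, so shifting `u` by a period `p` shifts
`x + u f(x)` by `p f(x)`: hence `p f(x)` is a period of `f` on `(x, ∞)`. For `n` large,
`f (a f(x)) = f ((n + 1) a + a f(x)) = f ((n + 1) a) = f a = 1`.
-/

theorem add_nat_mul_eq_of_add_eq {f : ℝ → ℝ} {p : ℝ} (hp : 0 ≤ p)
    (hper : ∀ u : ℝ, 0 < u → f (u + p) = f u) (n : ℕ) {u : ℝ} (hu : 0 < u) :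
    f (u + n * p) = f u := by
  induction n with
  | zero => simp
  | succ k ih =>
    rw [Nat.cast_succ, add_one_mul, ← add_assoc, hper _ (by positivity), ih]

section Beurling

variable {f : ℝ → ℝ}

theorem bfe_add_eq_of_eq_one
    (hBFE : ∀ u v : ℝ, 0 < u → 0 < v → f (v + u * f v) = f u * f v)
    {a : ℝ} (ha : 0 < a) (hfa : f a = 1) {u : ℝ} (hu : 0 < u) :
    f (u + a) = f u := by
  simpa [hfa, add_comm] using hBFE u a hu ha

theorem bfe_add_mul_eq_of_add_eq
    (hBFE : ∀ u v : ℝ, 0 < u → 0 < v → f (v + u * f v) = f u * f v)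
    {p : ℝ} (hp : 0 ≤ p) (hper : ∀ u : ℝ, 0 < u → f (u + p) = f u)
    {x : ℝ} (hx : 0 < x) (hfx : 0 < f x) {t : ℝ} (hxt : x < t) :
    f (t + p * f x) = f t := by
  set u := (t - x) / f x
  have hu : 0 < u := div_pos (sub_pos.mpr hxt) hfx
  have ht : x + u * f x = t := by simp only [u]; field_simp; ring
  calc f (t + p * f x) = f (x + (u + p) * f x) := by rw [← ht]; ring_nf
    _ = f (u + p) * f x := hBFE _ _ (by positivity) hx
    _ = f u * f x := by rw [hper u hu]
    _ = f t := by rw [← hBFE u x hu hx, ht]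

end Beurling

theorem bfe_value_one_on_range_multiples
    (f : ℝ → ℝ) (a : ℝ) (ha : 0 < a)
    (hpos : ∀ x : ℝ, 0 < x → 0 < f x)
    (hBFE : ∀ u v : ℝ, 0 < u → 0 < v → f (v + u * f v) = f u * f v)
    (hfa : f a = 1) :
    ∀ w ∈ {w : ℝ | ∃ x : ℝ, 0 < x ∧ w = f x}, f (w * a) = 1 := by
  rintro _ ⟨x, hx, rfl⟩
  have hfx := hpos x hx
  have hper : ∀ u : ℝ, 0 < u → f (u + a) = f u := fun u hu ↦ bfe_add_eq_of_eq_one hBFE ha hfa hu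
  obtain ⟨n, hn⟩ := exists_nat_gt (x / a)
  have hxn : x < a + n * a := by
    rw [div_lt_iff₀ ha] at hn
    linarith
  calc f (f x * a) = f (a * f x + a + n * a) := by
        rw [add_nat_mul_eq_of_add_eq ha.le hper n (by positivity), hper _ (by positivity), mul_comm]
    _ = f (a + n * a + a * f x) := by ring_nf
    _ = f (a + n * a) := bfe_add_mul_eq_of_add_eq hBFE ha.le hper hx hfx hxn
    _ = 1 := by rw [add_nat_mul_eq_of_add_eq ha.le hper n ha, hfa]
end

section
/- Let f : ℝ₊ → ℝ satisfy f(x) > 0 for all x > 0 and the Beurling functional equation f(v + u·f(v)) = f(u)·f(v) for all u, v > 0. If f(a) = 1 for some a > 0 (i.e. 1 lies in the range of f), then f(x) = 1 for all x > 0. -/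
theorem bfe_one_in_range_implies_constant
    (f : ℝ → ℝ) (a : ℝ) (ha : 0 < a)
    (hpos : ∀ x : ℝ, 0 < x → 0 < f x)
    (hBFE : ∀ u v : ℝ, 0 < u → 0 < v → f (v + u * f v) = f u * f v)
    (hfa : f a = 1) :
    ∀ x : ℝ, 0 < x → f x = 1 := by
  -- period a
  have hper : ∀ u : ℝ, 0 < u → f (u + a) = f u := by
    intro u hu
    have := hBFE u a hu ha
    rw [hfa, mul_one, mul_one] at this
    rw [add_comm a u] at this; exact this
  have hpern : ∀ n : ℕ, ∀ u : ℝ, 0 < u → f (u + n * a) = f u := by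
    intro n
    induction n with
    | zero => intro u hu; simp
    | succ n ih =>
      intro u hu
      have h1 : u + (n + 1 : ℕ) * a = (u + n * a) + a := by push_cast; ring
      rw [h1, hper (u + n * a) (by positivity), ih u hu]
  intro x hx
  by_contra hK
  set K := f x with hKdef
  have hKpos : 0 < K := hpos x hx
  rcases lt_or_gt_of_ne hK with hlt | hgt
  · -- K < 1
    set u := x / (1 - K) with hu
    have hupos : 0 < u := div_pos hx (by linarith)
    have hval : x + u * K = u := by
      have h1 : u * (1 - K) = x := by
        rw [hu, div_mul_cancel₀ _ (ne_of_gt (by linarith : (0:ℝ) < 1 - K))]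
      nlinarith [h1]
    have := hBFE u x hupos hx
    rw [← hKdef, hval] at this
    have hfu := hpos u hupos
    nlinarith
  · -- K > 1
    obtain ⟨n, hn⟩ := Archimedean.arch x ha
    have hn' : x < (n + 1 : ℕ) * a := by
      push_cast
      calc x ≤ n • a := hn
        _ = n * a := by simp [nsmul_eq_mul]
        _ < (n + 1) * a := by nlinarith
    set u := ((n + 1 : ℕ) * a - x) / (K - 1) with hu
    have hupos : 0 < u := div_pos (by linarith) (by linarith)
    have hval : x + u * K = u + (n + 1 : ℕ) * a := by
      have h1 : u * (K - 1) = (n + 1 : ℕ) * a - x := by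
        rw [hu, div_mul_cancel₀ _ (ne_of_gt (by linarith : (0:ℝ) < K - 1))]
      nlinarith [h1]
    have := hBFE u x hupos hx
    rw [← hKdef, hval, hpern (n + 1) u hupos] at this
    have hfu := hpos u hupos
    nlinarith
end

section
/- Let k : ℝ₊ → ℝ be positive and locally bounded above and away from 0 on ℝ₊ (every point x > 0 has a neighbourhood on which m ≤ k ≤ M for some constants 0 < m ≤ M); let g : ℝ₊ → ℝ be such that for some ε > 0 one has g(u) ≠ 0 for all u ∈ (0, ε); and let K : [0,∞) → ℝ satisfy K(0) = 0, K(x) → 0 as x → 0⁺, and the Goldie–Beurling equation K(v + u·k(v)) − K(v) = g(u)·k(v) for all u, v > 0. Then there is a constant c such that K(x) = c·x for all x ≥ 0 and g(u) = c·u for all u > 0. -/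
set_option maxHeartbeats 1000000 in
theorem goldie_beurling_equation_linear
    (k g K : ℝ → ℝ) (ε : ℝ) (hε : 0 < ε)
    (hkpos : ∀ x : ℝ, 0 < x → 0 < k x)
    (hkloc : ∀ x : ℝ, 0 < x → ∃ m M : ℝ, 0 < m ∧ m ≤ M ∧
      ∃ U ∈ nhds x, ∀ y ∈ U, m ≤ k y ∧ k y ≤ M)
    (hg : ∀ u ∈ Set.Ioo (0 : ℝ) ε, g u ≠ 0)
    (hK0 : K 0 = 0)
    (hKlim : Filter.Tendsto K (nhdsWithin 0 (Set.Ioi 0)) (nhds 0))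
    (heq : ∀ u v : ℝ, 0 < u → 0 < v → K (v + u * k v) - K v = g u * k v) :
    ∃ c : ℝ, (∀ x : ℝ, 0 ≤ x → K x = c * x) ∧ (∀ u : ℝ, 0 < u → g u = c * u) := by
  -- Step A : g is bounded near 0
  have hA : ∃ B s₁ : ℝ, 0 < s₁ ∧ 0 ≤ B ∧ ∀ u : ℝ, 0 < u → u < s₁ → |g u| ≤ B := by
    rw [Metric.tendsto_nhdsWithin_nhds] at hKlim
    obtain ⟨δ, hδ, hKb⟩ := hKlim 1 one_pos
    have ha : (0:ℝ) < δ/2 := by linarith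
    set a : ℝ := δ/2 with hadef
    have hκ : 0 < k a := hkpos a ha
    refine ⟨2 / k a, (δ/2) / k a, by positivity, by positivity, ?_⟩
    intro u hu hus
    have hΦ : a + u * k a < δ := by
      have : u * k a < δ/2 := (lt_div_iff₀ hκ).mp hus
      linarith
    have hΦ0 : 0 < a + u * k a := by positivity
    have h1 : |K (a + u * k a)| < 1 := by
      have := hKb (Set.mem_Ioi.mpr hΦ0) (by rw [Real.dist_eq]; rw [abs_of_pos (by linarith : (0:ℝ) < a + u * k a - 0)] <;> linarith)
      simpa [Real.dist_eq] using this
    have h2 : |K a| < 1 := by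
      have := hKb (Set.mem_Ioi.mpr ha) (by rw [Real.dist_eq]; rw [abs_of_pos (by linarith : (0:ℝ) < a - 0)] <;> linarith)
      simpa [Real.dist_eq] using this
    have h3 := heq u a hu ha
    have h4 : |g u * k a| ≤ 2 := by
      rw [← h3]
      calc |K (a + u * k a) - K a| ≤ |K (a + u * k a)| + |K a| := abs_sub _ _
      _ ≤ 2 := by linarith
    rw [abs_mul, abs_of_pos hκ] at h4
    exact (le_div_iff₀ hκ).mpr h4
  obtain ⟨B, s₁, hs₁, hB0, hB⟩ := hA
  -- Step B : compact bounds for k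
  have hcomp : ∀ a b : ℝ, 0 < a → a ≤ b → ∃ m M : ℝ, 0 < m ∧
      ∀ y ∈ Set.Icc a b, m ≤ k y ∧ k y ≤ M := by
    intro a b ha hab
    choose mf Mf hmf _hmM Uf hUn hUb using hkloc
    set V : ℝ → Set ℝ := fun x => if h : 0 < x then Uf x h else Set.univ with hV
    have hVn : ∀ x ∈ Set.Icc a b, V x ∈ nhds x := by
      intro x hx
      have hx0 : 0 < x := lt_of_lt_of_le ha hx.1
      simp only [hV, dif_pos hx0]
      exact hUn x hx0
    obtain ⟨t, hts, htc⟩ := (isCompact_Icc (a := a) (b := b)).elim_nhds_subcover V hVn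
    have htne : t.Nonempty := by
      by_contra h
      rw [Finset.not_nonempty_iff_eq_empty] at h
      have : a ∈ ⋃ x ∈ t, V x := htc ⟨le_refl a, hab⟩
      simp [h] at this
    set m' : ℝ → ℝ := fun x => if h : 0 < x then mf x h else 1 with hm'
    set M' : ℝ → ℝ := fun x => if h : 0 < x then Mf x h else 1 with hM'
    refine ⟨t.inf' htne m', t.sup' htne M', ?_, ?_⟩
    · rw [Finset.lt_inf'_iff]
      intro i hi
      have hi0 : 0 < i := lt_of_lt_of_le ha (hts i hi).1
      simp only [hm', dif_pos hi0]
      exact hmf i hi0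
    · intro y hy
      obtain ⟨x, hxt, hyx⟩ := Set.mem_iUnion₂.mp (htc hy)
      have hx0 : 0 < x := lt_of_lt_of_le ha (hts x hxt).1
      simp only [hV, dif_pos hx0] at hyx
      have hb := hUb x hx0 y hyx
      constructor
      · refine le_trans (Finset.inf'_le m' hxt) ?_
        simp only [hm', dif_pos hx0]; exact hb.1
      · refine le_trans ?_ (Finset.le_sup' M' hxt)
        simp only [hM', dif_pos hx0]; exact hb.2
  -- Step C : the two-step (E1) identity
  have hE1 : ∀ v s t : ℝ, 0 < v → 0 < s → 0 < t →
      g (s + t * (k (v + s * k v) / k v)) * k v = g s * k v + g t * k (v + s * k v) := by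
    intro v s t hv hs ht
    have hkv : 0 < k v := hkpos v hv
    set w : ℝ := v + s * k v with hw
    have hw0 : 0 < w := by positivity
    have hkw : 0 < k w := hkpos w hw0
    have h1 := heq s v hs hv
    have h2 := heq t w ht hw0
    have h3 := heq (s + t * (k w / k v)) v (by positivity) hv
    have harg : v + (s + t * (k w / k v)) * k v = w + t * k w := by
      field_simp
      ring
    rw [harg] at h3
    linarith
  -- Step C' : g tends to 0 at 0+
  have hG0 : ∀ θ : ℝ, 0 < θ → ∃ s : ℝ, 0 < s ∧ ∀ u : ℝ, 0 < u → u < s → |g u| ≤ θ := by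
    obtain ⟨m, M, hm, hmM, U, hUn, hUb⟩ := hkloc 1 one_pos
    obtain ⟨γ, hγ, hball⟩ := Metric.mem_nhds_iff.mp hUn
    have hM : 0 < M := lt_of_lt_of_le hm hmM
    have hk1m : m ≤ k 1 ∧ k 1 ≤ M := hUb 1 (mem_of_mem_nhds hUn)
    have hk1 : 0 < k 1 := hkpos 1 one_pos
    obtain ⟨lam, hlam⟩ : ∃ lam : ℝ, lam = 1 + M / m := ⟨_, rfl⟩
    obtain ⟨c₀, hc₀⟩ : ∃ c₀ : ℝ, c₀ = 1 + m / M := ⟨_, rfl⟩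
    have hMm : 0 < M / m := by positivity
    have hmM' : 0 < m / M := by positivity
    have hlam1 : 1 < lam := by rw [hlam]; linarith
    have hlam0 : 0 < lam := by linarith
    have hc₀1 : 1 < c₀ := by rw [hc₀]; linarith
    have hc₀0 : 0 < c₀ := by linarith
    obtain ⟨s₂, hs₂def⟩ : ∃ s₂ : ℝ, s₂ = min s₁ (γ / M) := ⟨_, rfl⟩
    have hs₂ : 0 < s₂ := hs₂def ▸ lt_min hs₁ (by positivity)
    -- the doubling step, valid for 0 < u < γ/M
    have hdbl : ∀ u : ℝ, 0 < u → u < γ / M →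
        ∃ ρ : ℝ, m / M ≤ ρ ∧ ρ ≤ M / m ∧ g (u * (1 + ρ)) = (1 + ρ) * g u := by
      intro u hu huγ
      have hw0 : (0:ℝ) < 1 + u * k 1 := by positivity
      have hwU : (1 + u * k 1) ∈ U := by
        apply hball
        rw [Metric.mem_ball, Real.dist_eq]
        have h1 : u * k 1 ≤ u * M := by nlinarith [hk1m.2]
        have h2 : u * M < γ := by
          rw [lt_div_iff₀ hM] at huγ; linarith
        have he : (1:ℝ) + u * k 1 - 1 = u * k 1 := by ring
        rw [he, abs_of_pos (mul_pos hu hk1)]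
        linarith
      have hkw := hUb _ hwU
      have hkwpos : 0 < k (1 + u * k 1) := hkpos _ hw0
      have hne : k 1 ≠ 0 := ne_of_gt hk1
      refine ⟨k (1 + u * k 1) / k 1, ?_, ?_, ?_⟩
      · rw [div_le_div_iff₀ hM hk1]; nlinarith [hk1m.2, hkw.1]
      · rw [div_le_div_iff₀ hk1 hm]; nlinarith [hk1m.1, hkw.2]
      · have h := hE1 1 u u one_pos hu hu
        have harg : u + u * (k (1 + u * k 1) / k 1) = u * (1 + k (1 + u * k 1) / k 1) := by
          ring
        rw [harg] at h
        have hk : k (1 + u * k 1) / k 1 * k 1 = k (1 + u * k 1) := div_mul_cancel₀ _ hne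
        apply mul_right_cancel₀ hne
        linear_combination h - g u * hk
    -- induction
    have hind : ∀ n : ℕ, ∀ u : ℝ, 0 < u → u < s₂ / lam ^ n → |g u| ≤ B / c₀ ^ n := by
      intro n
      induction n with
      | zero =>
        intro u hu hus
        simp only [pow_zero, div_one] at hus ⊢
        exact hB u hu (lt_of_lt_of_le hus (hs₂def ▸ min_le_left _ _))
      | succ n ih =>
        intro u hu hus
        have hlamn : (1:ℝ) ≤ lam ^ (n+1) := one_le_pow₀ (le_of_lt hlam1)
        have hlamnp : (0:ℝ) < lam ^ n := by positivity
        have huγ : u < γ / M := by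
          have h1 : s₂ / lam ^ (n+1) ≤ s₂ := div_le_self (le_of_lt hs₂) hlamn
          exact lt_of_lt_of_le (lt_of_lt_of_le hus h1) (hs₂def ▸ min_le_right s₁ (γ / M))
        obtain ⟨ρ, hρl, hρu, hgd⟩ := hdbl u hu huγ
        have hρpos : 0 < ρ := lt_of_lt_of_le hmM' hρl
        have hv0 : 0 < u * (1 + ρ) := by positivity
        have hvlt : u * (1 + ρ) < s₂ / lam ^ n := by
          have hρlam : 1 + ρ ≤ lam := by rw [hlam]; linarith
          have h1 : u * (1 + ρ) ≤ u * lam := by nlinarith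
          have h2 : u * lam < s₂ / lam ^ (n+1) * lam :=
            mul_lt_mul_of_pos_right hus hlam0
          have h3 : s₂ / lam ^ (n+1) * lam = s₂ / lam ^ n := by
            rw [pow_succ, ← div_div, div_mul_cancel₀ _ (ne_of_gt hlam0)]
          linarith
        have hv := ih (u * (1 + ρ)) hv0 hvlt
        rw [hgd, abs_mul, abs_of_pos (by linarith : (0:ℝ) < 1 + ρ)] at hv
        have hc₀ρ : c₀ ≤ 1 + ρ := by rw [hc₀]; linarith
        have hcg : c₀ * |g u| ≤ B / c₀ ^ n := by nlinarith [abs_nonneg (g u)]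
        have : |g u| ≤ B / c₀ ^ n / c₀ := by
          rw [le_div_iff₀ hc₀0]; linarith
        rwa [div_div, ← pow_succ] at this
    intro θ hθ
    obtain ⟨n, hn⟩ := pow_unbounded_of_one_lt (B / θ) hc₀1
    refine ⟨s₂ / lam ^ n, by positivity, ?_⟩
    intro u hu hus
    refine le_trans (hind n u hu hus) ?_
    rw [div_le_iff₀ (by positivity : (0:ℝ) < c₀ ^ n)]
    rw [div_lt_iff₀ hθ] at hn
    nlinarith
  -- Step D : orbit lemma
  have horb : ∀ a b m M t θ : ℝ, 0 < a → a < b → 0 < m →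
      (∀ y ∈ Set.Icc a b, m ≤ k y ∧ k y ≤ M) → 0 < t →
      (∀ u : ℝ, 0 < u → u ≤ t → |g u| ≤ θ) →
      |K b - K a - g t / t * (b - a)| ≤ 2 * (M * θ) := by
    intro a b m M t θ ha hab hm hbd ht hgθ
    have hθ0 : 0 ≤ θ := le_trans (abs_nonneg _) (hgθ t ht le_rfl)
    have hM0 : 0 < M := lt_of_lt_of_le hm (by simpa using (hbd a ⟨le_rfl, le_of_lt hab⟩).1.trans (hbd a ⟨le_rfl, le_of_lt hab⟩).2)
    -- the orbit
    set f : ℝ → ℝ := fun p => p + t * k p with hf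
    set x : ℕ → ℝ := fun n => f^[n] a with hx
    have hx0 : x 0 = a := rfl
    have hxs : ∀ n, x (n+1) = x n + t * k (x n) := by
      intro n
      simp only [hx, Function.iterate_succ_apply', hf]
    have hxpos : ∀ n, a ≤ x n := by
      intro n
      induction n with
      | zero => simp [hx0]
      | succ n ih =>
        rw [hxs n]
        have : 0 < k (x n) := hkpos _ (lt_of_lt_of_le ha ih)
        nlinarith
    have hxpos' : ∀ n, 0 < x n := fun n => lt_of_lt_of_le ha (hxpos n)
    have hxmono : ∀ n, x n < x (n+1) := by
      intro n
      rw [hxs n]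
      have : 0 < k (x n) := hkpos _ (hxpos' n)
      nlinarith
    -- the K identity along the orbit
    have hKor : ∀ n, K (x n) = K a + g t / t * (x n - a) := by
      intro n
      induction n with
      | zero => simp [hx0]
      | succ n ih =>
        have htne : t ≠ 0 := ne_of_gt ht
        have h1 := heq t (x n) ht (hxpos' n)
        rw [← hxs n] at h1
        have h2 : g t / t * (x (n+1) - a) = g t / t * (x n - a) + g t * k (x n) := by
          rw [hxs n]
          field_simp
          ring
        linarith [ih, h1, h2]
    -- the orbit escapes b
    have hesc : ∃ n, b < x n := by
      by_contra hcon
      push_neg at hcon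
      obtain ⟨n, hn⟩ := exists_nat_gt ((b - a) / (t * m))
      have hlow : ∀ j, a + j * (t * m) ≤ x j := by
        intro j
        induction j with
        | zero => simp [hx0]
        | succ j ih =>
          have hIcc : x j ∈ Set.Icc a b := ⟨hxpos j, hcon j⟩
          have hk := (hbd _ hIcc).1
          rw [hxs j]
          push_cast
          nlinarith
      have := hlow n
      have h2 : (b - a) / (t * m) * (t * m) < n * (t * m) :=
        mul_lt_mul_of_pos_right hn (by positivity)
      rw [div_mul_cancel₀ _ (by positivity : t * m ≠ 0)] at h2
      have := hcon n
      nlinarith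
    -- last orbit point ≤ b
    have hx0b : ¬ b < x 0 := by rw [hx0]; exact not_lt.mpr (le_of_lt hab)
    have hn₀pos : Nat.find hesc ≠ 0 := by
      intro h
      exact hx0b (h ▸ Nat.find_spec hesc)
    obtain ⟨N, hN⟩ := Nat.exists_eq_succ_of_ne_zero hn₀pos
    have hxNle : x N ≤ b := not_lt.mp (Nat.find_min hesc (by omega))
    have hxN1 : b < x (N+1) := by
      have := Nat.find_spec hesc
      rwa [hN] at this
    have hpIcc : x N ∈ Set.Icc a b := ⟨hxpos N, hxNle⟩
    obtain ⟨hkm, hkM⟩ := hbd _ hpIcc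
    have hkp : 0 < k (x N) := hkpos _ (hxpos' N)
    have hgap : b - x N < t * k (x N) := by
      have := hxs N
      linarith [hxN1]
    have hKN := hKor N
    rcases eq_or_lt_of_le hxNle with hpb | hpb
    · -- x N = b exactly
      rw [hpb] at hKN
      have : K b - K a - g t / t * (b - a) = 0 := by linarith
      rw [this, abs_zero]
      positivity
    · -- final partial step
      set uf : ℝ := (b - x N) / k (x N) with huf
      have huf0 : 0 < uf := by rw [huf]; exact div_pos (by linarith) hkp
      have huft : uf ≤ t := by
        rw [huf, div_le_iff₀ hkp]
        nlinarith
      have hufk : uf * k (x N) = b - x N := div_mul_cancel₀ _ (ne_of_gt hkp)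
      have hfin := heq uf (x N) huf0 (hxpos' N)
      rw [hufk] at hfin
      have hb' : x N + (b - x N) = b := by ring
      rw [hb'] at hfin
      have hguf : |g uf| ≤ θ := hgθ uf huf0 huft
      have hgt : |g t| ≤ θ := hgθ t ht le_rfl
      have key : K b - K a - g t / t * (b - a)
          = g uf * k (x N) - g t / t * (b - x N) := by
        have : K b = K (x N) + g uf * k (x N) := by linarith
        rw [this, hKN]; ring
      rw [key]
      have e1 : |g uf * k (x N)| ≤ θ * M := by
        rw [abs_mul, abs_of_pos hkp]
        have := abs_nonneg (g uf)
        nlinarith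
      have e2 : |g t / t * (b - x N)| ≤ θ * M := by
        rw [abs_mul, abs_div, abs_of_pos ht, abs_of_nonneg (by linarith : (0:ℝ) ≤ b - x N)]
        rw [div_mul_eq_mul_div, div_le_iff₀ ht]
        have h1 : b - x N ≤ t * M := by nlinarith
        have := abs_nonneg (g t)
        nlinarith
      calc |g uf * k (x N) - g t / t * (b - x N)|
          ≤ |g uf * k (x N)| + |g t / t * (b - x N)| := abs_sub _ _
        _ ≤ 2 * (M * θ) := by linarith
  -- Step E : assembly
  set c : ℝ := K 2 - K 1 with hc
  have hAB : ∀ a b : ℝ, 0 < a → a < b → K b - K a = c * (b - a) := by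
    intro a b ha hab
    obtain ⟨m, M, hm, hbd⟩ := hcomp a b ha (le_of_lt hab)
    obtain ⟨m', M', hm', hbd'⟩ := hcomp 1 2 one_pos one_le_two
    have hM0 : 0 < M := lt_of_lt_of_le hm (le_trans (hbd a ⟨le_rfl, le_of_lt hab⟩).1 (hbd a ⟨le_rfl, le_of_lt hab⟩).2)
    have hM0' : 0 < M' := lt_of_lt_of_le hm' (le_trans (hbd' 1 ⟨le_rfl, one_le_two⟩).1 (hbd' 1 ⟨le_rfl, one_le_two⟩).2)
    have key : ∀ θ : ℝ, 0 < θ → |K b - K a - c * (b - a)| ≤ θ * (2 * M + (b - a) * (2 * M')) := by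
      intro θ hθ
      obtain ⟨s, hs, hgs⟩ := hG0 θ hθ
      have ht : 0 < s / 2 := by linarith
      have hgθ : ∀ u : ℝ, 0 < u → u ≤ s / 2 → |g u| ≤ θ := by
        intro u hu hus
        exact hgs u hu (by linarith)
      have h1 := horb a b m M (s/2) θ ha hab hm hbd ht hgθ
      have h2 := horb 1 2 m' M' (s/2) θ one_pos one_lt_two hm' hbd' ht hgθ
      have h2' : |K 2 - K 1 - g (s/2) / (s/2)| ≤ 2 * (M' * θ) := by
        have : (2:ℝ) - 1 = 1 := by norm_num
        rw [this, mul_one] at h2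
        exact h2
      have hsplit : K b - K a - c * (b - a)
          = (K b - K a - g (s/2) / (s/2) * (b - a))
            + (g (s/2) / (s/2) - c) * (b - a) := by ring
      rw [hsplit]
      have e2 : |(g (s/2) / (s/2) - c) * (b - a)| ≤ 2 * (M' * θ) * (b - a) := by
        rw [abs_mul, abs_of_pos (by linarith : (0:ℝ) < b - a)]
        have : |g (s/2) / (s/2) - c| ≤ 2 * (M' * θ) := by
          rw [hc]
          rw [abs_sub_comm] at h2'
          exact h2'
        nlinarith
      calc |(K b - K a - g (s/2) / (s/2) * (b - a)) + (g (s/2) / (s/2) - c) * (b - a)|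
          ≤ |K b - K a - g (s/2) / (s/2) * (b - a)| + |(g (s/2) / (s/2) - c) * (b - a)| := abs_add_le _ _
        _ ≤ 2 * (M * θ) + 2 * (M' * θ) * (b - a) := by linarith
        _ = θ * (2 * M + (b - a) * (2 * M')) := by ring
    have hzero : K b - K a - c * (b - a) = 0 := by
      set C : ℝ := 2 * M + (b - a) * (2 * M') with hC
      have hC0 : 0 < C := by rw [hC]; nlinarith
      have habs : |K b - K a - c * (b - a)| ≤ 0 := by
        apply le_of_forall_pos_le_add
        intro η hη
        have := key (η / C) (by positivity)
        rw [zero_add]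
        calc |K b - K a - c * (b - a)| ≤ η / C * C := this
          _ = η := div_mul_cancel₀ _ (ne_of_gt hC0)
      exact abs_eq_zero.mp (le_antisymm habs (abs_nonneg _))
    linarith
  have hKx : ∀ x : ℝ, 0 < x → K x = c * x := by
    intro x hx
    -- let a → 0⁺
    have hev : ∀ᶠ a in nhdsWithin 0 (Set.Ioi 0), K a = (K x - c * x) + c * a := by
      filter_upwards [self_mem_nhdsWithin,
        eventually_nhdsWithin_of_eventually_nhds (eventually_lt_nhds hx)] with a ha hax
      have := hAB a x ha hax
      -- K x - K a = c (x - a)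
      linarith
    have hlim2 : Filter.Tendsto (fun a : ℝ => (K x - c * x) + c * a)
        (nhdsWithin 0 (Set.Ioi 0)) (nhds ((K x - c * x) + c * 0)) := by
      apply Filter.Tendsto.mono_left _ nhdsWithin_le_nhds
      exact (continuous_const.add (continuous_const.mul continuous_id)).tendsto 0
    have := tendsto_nhds_unique hKlim (Filter.Tendsto.congr' (hev.mono fun a ha => ha.symm) hlim2)
    -- 0 = K x - c x + c * 0
    have : K x = c * x := by
      rw [mul_zero, add_zero] at this
      linarith
    exact this
  refine ⟨c, ?_, ?_⟩
  · intro x hx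
    rcases eq_or_lt_of_le hx with h | h
    · rw [← h, hK0]; ring
    · exact hKx x h
  · intro u hu
    have h1 : (0:ℝ) < 1 := one_pos
    have hk1 : 0 < k 1 := hkpos 1 h1
    have heq1 := heq u 1 hu h1
    have hw : (0:ℝ) < 1 + u * k 1 := by positivity
    rw [hKx _ hw, hKx _ h1] at heq1
    have h2 : g u * k 1 = c * u * k 1 := by linarith [heq1]
    exact mul_right_cancel₀ (ne_of_gt hk1) h2
end

section
/- Let φ : [0,∞) → ℝ satisfy φ(0) = 1, φ(x) > 0 for all x > 0, and the Beurling functional equation φ(v + u·φ(v)) = φ(u)·φ(v) for all u, v > 0. Fix u > 0 and define the Beck sequence t₀ = 0, t_{m+1} = t_m + u·φ(t_m). Then: φ(t_m) = φ(u)^m for all m ≥ 0; if φ(u) = 1 then t_m = m·u, while if φ(u) ≠ 1 then t_m = u·(φ(u)^m − 1)/(φ(u) − 1); the sequence (t_m) tends to +∞; and consequently for every t > 0 there is a unique integer m with t_m ≤ t < t_{m+1}. -/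
theorem beck_sequence_properties
    (φ : ℝ → ℝ) (u : ℝ) (hu : 0 < u)
    (hφ0 : φ 0 = 1)
    (hpos : ∀ x : ℝ, 0 < x → 0 < φ x)
    (hBFE : ∀ u' v : ℝ, 0 < u' → 0 < v → φ (v + u' * φ v) = φ u' * φ v)
    (t : ℕ → ℝ) (ht0 : t 0 = 0)
    (htrec : ∀ m : ℕ, t (m + 1) = t m + u * φ (t m)) :
    (∀ m : ℕ, φ (t m) = φ u ^ m) ∧
    (φ u = 1 → ∀ m : ℕ, t m = m * u) ∧
    (φ u ≠ 1 → ∀ m : ℕ, t m = u * (φ u ^ m - 1) / (φ u - 1)) ∧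
    Filter.Tendsto t Filter.atTop Filter.atTop ∧
    (∀ s : ℝ, 0 < s → ∃! m : ℕ, t m ≤ s ∧ s < t (m + 1)) := by
  have hq : 0 < φ u := hpos u hu
  -- t m > 0 for m ≥ 1
  have htpos : ∀ m : ℕ, 0 < t (m + 1) := by
    intro m
    induction m with
    | zero => rw [htrec, ht0, hφ0]; simpa using hu
    | succ m ih =>
      rw [htrec]
      have := hpos _ ih
      nlinarith
  -- main power identity
  have h1 : ∀ m : ℕ, φ (t m) = φ u ^ m := by
    intro m
    induction m with
    | zero => simp [ht0, hφ0]
    | succ m ih =>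
      rcases Nat.eq_zero_or_pos m with h | h
      · subst h
        rw [htrec, ht0, hφ0]
        simp
      · obtain ⟨k, rfl⟩ := Nat.exists_eq_succ_of_ne_zero h.ne'
        rw [htrec, hBFE u (t (k + 1)) hu (htpos k), ih, Nat.succ_eq_add_one, pow_succ]
        ring
  -- φ u ≥ 1
  have hge1 : 1 ≤ φ u := by
    by_contra h
    push_neg at h
    set q := φ u with hqdef
    have h1q : 0 < 1 - q := by linarith
    set T : ℝ := u / (1 - q) with hT
    have hTpos : 0 < T := div_pos hu h1q
    have key := hBFE T u hTpos hu
    have harg : u + T * φ u = T := by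
      rw [hT, ← hqdef]
      field_simp
      ring
    rw [harg] at key
    have hφT : 0 < φ T := hpos T hTpos
    have : q = 1 := by
      have := key
      nlinarith
    linarith
  refine ⟨h1, ?_, ?_, ?_, ?_⟩
  · intro hq1 m
    induction m with
    | zero => simp [ht0]
    | succ m ih =>
      rw [htrec, h1, ih, hq1]
      push_cast
      ring
  · intro hq1 m
    have hne : φ u - 1 ≠ 0 := sub_ne_zero.mpr hq1
    induction m with
    | zero => simp [ht0]
    | succ m ih =>
      rw [htrec, h1, ih, pow_succ]
      field_simp
      ring
  · have hlow : ∀ m : ℕ, (m : ℝ) * u ≤ t m := by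
      intro m
      induction m with
      | zero => simp [ht0]
      | succ m ih =>
        rw [htrec, h1]
        have : (1 : ℝ) ≤ φ u ^ m := one_le_pow₀ hge1
        push_cast
        nlinarith
    exact Filter.tendsto_atTop_mono hlow
      (Filter.Tendsto.atTop_mul_const hu tendsto_natCast_atTop_atTop)
  · -- existence and uniqueness
    have hmono : StrictMono t := by
      apply strictMono_nat_of_lt_succ
      intro n
      rw [htrec, h1]
      have : 0 < φ u ^ n := pow_pos hq n
      nlinarith
    have hlow : ∀ m : ℕ, (m : ℝ) * u ≤ t m := by
      intro m
      induction m with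
      | zero => simp [ht0]
      | succ m ih =>
        rw [htrec, h1]
        have : (1 : ℝ) ≤ φ u ^ m := one_le_pow₀ hge1
        push_cast
        nlinarith
    intro s hs
    have hex : ∃ n : ℕ, s < t n := by
      obtain ⟨n, hn⟩ := exists_nat_gt (s / u)
      exact ⟨n, lt_of_lt_of_le (by rw [div_lt_iff₀ hu] at hn; linarith [hn]) (hlow n)⟩
    classical
    set N := Nat.find hex with hN
    have hNspec : s < t N := Nat.find_spec hex
    have hN0 : N ≠ 0 := by
      intro h
      rw [h, ht0] at hNspec
      linarith
    obtain ⟨M, hM⟩ : ∃ M, N = M + 1 := ⟨N - 1, by omega⟩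
    refine ⟨M, ⟨?_, ?_⟩, ?_⟩
    · have := Nat.find_min hex (m := M) (by omega)
      push_neg at this
      exact this
    · rw [← hM]; exact hNspec
    · rintro y ⟨hy1, hy2⟩
      by_contra hne
      rcases Nat.lt_or_ge y M with h | h
      · have : t (y + 1) ≤ t M := hmono.le_iff_le.mpr (by omega)
        have htM : t M ≤ s := by
          have := Nat.find_min hex (m := M) (by omega)
          push_neg at this
          exact this
        linarith
      · have hMy : M < y := by omega
        have : t (M + 1) ≤ t y := hmono.le_iff_le.mpr (by omega)
        rw [← hM] at this
        linarith
end
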